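/- arXiv:1503.03648 — 6 statements merged into one kernel-verified Lean document; each statement's English description precedes it below -/
import Mathlib

section
/- Let U ⊆ ℂ be an open connected set and let u : U → ℂ be twice continuously differentiable with Δu = 0 on U. Then H_u(z) = ∂_z u(z) · ∂_z ū(z) vanishes identically on U if and only if u is conformal, i.e. either u is holomorphic on U or the pointwise conjugate z ↦ ū(z) is holomorphic on U. -/
open Complex MeasureTheory

noncomputable section

/-- Partial derivative in the `x`-direction (as a function of `z = x + iy`). -/
def pdx (u : ℂ → ℂ) (z : ℂ) : ℂ := fderiv ℝ u z 1

/-- Partial derivative in the `y`-direction. -/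
def pdy (u : ℂ → ℂ) (z : ℂ) : ℂ := fderiv ℝ u z Complex.I

/-- Wirtinger derivative `∂_z u = (1/2)(∂ₓu − i ∂_y u)`. -/
def wirt (u : ℂ → ℂ) (z : ℂ) : ℂ := (1 / 2) * (pdx u z - Complex.I * pdy u z)

/-- Hopf differential coefficient `H_u(z) = ∂_z u · ∂_z ū`. -/
def hopf (u : ℂ → ℂ) (z : ℂ) : ℂ :=
  wirt u z * wirt (fun w => (starRingEnd ℂ) (u w)) z

/-- Open annulus `A_ρ = {ρ < |z| < 1}`. -/
def ann (ρ : ℝ) : Set ℂ := {z : ℂ | ρ < ‖z‖ ∧ ‖z‖ < 1}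

/-- Closed annulus `Ā_ρ = {ρ ≤ |z| ≤ 1}`. -/
def cann (ρ : ℝ) : Set ℂ := {z : ℂ | ρ ≤ ‖z‖ ∧ ‖z‖ ≤ 1}

/-- Boundary `∂A_ρ`, the union of the circles `|z| = 1` and `|z| = ρ`. -/
def bdry (ρ : ℝ) : Set ℂ := {z : ℂ | ‖z‖ = 1 ∨ ‖z‖ = ρ}

/-- Wedge product `a ∧ b = Re a · Im b − Im a · Re b`. -/
def wedge (a b : ℂ) : ℝ := a.re * b.im - a.im * b.re

/-- Radial derivative `∂_r u(z)`, the directional derivative in direction `z/|z|`. -/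
def rderiv (u : ℂ → ℂ) (z : ℂ) : ℂ := fderiv ℝ u z (z / (‖z‖ : ℂ))

/-- Degree of `u` on the circle `|z| = r`:
`deg(u, C_r) = (1/2π) ∫₀^{2π} u(re^{iθ}) ∧ ∂_θ[u(re^{iθ})] dθ`. -/
def degCirc (u : ℂ → ℂ) (r : ℝ) : ℝ :=
  (1 / (2 * Real.pi)) * ∫ θ in (0:ℝ)..(2 * Real.pi),
    wedge (u ((r : ℂ) * Complex.exp (Complex.I * θ)))
      (deriv (fun t : ℝ => u ((r : ℂ) * Complex.exp (Complex.I * t))) θ)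

/-- Dirichlet energy `E(u) = (1/2) ∫_{A_ρ} (|∂ₓu|² + |∂_y u|²)`. -/
def energy (ρ : ℝ) (u : ℂ → ℂ) : ℝ :=
  (1 / 2) * ∫ z in ann ρ, (‖pdx u z‖ ^ 2 + ‖pdy u z‖ ^ 2)

end

/-! Harmonicity of `u` is exactly the Cauchy–Riemann system for `∂_z u`, and `ū` is harmonic
along with `u`, so both factors `∂_z u` and `∂_z ū` of `H_u` are holomorphic. On a connected
domain one of them must then vanish identically, and `∂_z u = 0` is the Cauchy–Riemann equation
for `ū`, while `∂_z ū = 0` is the one for `u`. -/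

open ComplexConjugate

section Wirtinger

variable {u : ℂ → ℂ} {z : ℂ}

lemma pdx_conj (u : ℂ → ℂ) : pdx (fun w => conj (u w)) = fun w => conj (pdx u w) := by
  funext w
  change fderiv ℝ (conjCLE ∘ u) w 1 = _
  rw [conjCLE.comp_fderiv]
  rfl

lemma pdy_conj (u : ℂ → ℂ) : pdy (fun w => conj (u w)) = fun w => conj (pdy u w) := by
  funext w
  change fderiv ℝ (conjCLE ∘ u) w I = _
  rw [conjCLE.comp_fderiv]
  rfl

lemma fderiv_fderiv_apply (h : DifferentiableAt ℝ (fderiv ℝ u) z) (v w : ℂ) :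
    fderiv ℝ (fun y => fderiv ℝ u y w) z v = fderiv ℝ (fderiv ℝ u) z v w := by
  rw [fderiv_clm_apply h (differentiableAt_const w)]
  simp

lemma fderiv_pdx (h : DifferentiableAt ℝ (fderiv ℝ u) z) (v : ℂ) :
    fderiv ℝ (pdx u) z v = fderiv ℝ (fderiv ℝ u) z v 1 :=
  fderiv_fderiv_apply h v 1

lemma fderiv_pdy (h : DifferentiableAt ℝ (fderiv ℝ u) z) (v : ℂ) :
    fderiv ℝ (pdy u) z v = fderiv ℝ (fderiv ℝ u) z v I :=
  fderiv_fderiv_apply h v I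

theorem differentiableAt_wirt_of_harmonic (hu : ContDiffAt ℝ 2 u z)
    (hΔ : pdx (pdx u) z + pdy (pdy u) z = 0) : DifferentiableAt ℂ (wirt u) z := by
  have h₁ : DifferentiableAt ℝ (fderiv ℝ u) z :=
    (hu.fderiv_right (m := 1) le_rfl).differentiableAt one_ne_zero
  have hx : DifferentiableAt ℝ (pdx u) z := h₁.clm_apply (differentiableAt_const 1)
  have hy : DifferentiableAt ℝ (pdy u) z := h₁.clm_apply (differentiableAt_const I)
  have hsymm : fderiv ℝ (fderiv ℝ u) z 1 I = fderiv ℝ (fderiv ℝ u) z I 1 :=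
    hu.isSymmSndFDerivAt (by simp) 1 I
  rw [pdx, pdy, fderiv_pdx h₁, fderiv_pdy h₁] at hΔ
  have hd : DifferentiableAt ℝ (fun y => pdx u y - I * pdy u y) z := by fun_prop
  refine differentiableAt_complex_iff_differentiableAt_real.2 ⟨hd.const_mul _, ?_⟩
  unfold wirt
  rw [fderiv_const_mul hd, fderiv_fun_sub hx (hy.const_mul I), fderiv_const_mul hy]
  simp only [smul_apply, sub_apply, smul_eq_mul, fderiv_pdx h₁, fderiv_pdy h₁]
  linear_combination
    (-1/2 : ℂ) * hsymm + (-I/2) * hΔ + (fderiv ℝ (fderiv ℝ u) z 1 I / 2) * I_sq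

theorem wirt_eq_zero_iff_differentiableAt_conj (hu : DifferentiableAt ℝ u z) :
    wirt u z = 0 ↔ DifferentiableAt ℂ (fun w => conj (u w)) z := by
  have hCR : DifferentiableAt ℂ (fun w => conj (u w)) z ↔
      conj (pdy u z) = conj (-I * pdx u z) := by
    rw [differentiableAt_complex_iff_differentiableAt_real]
    refine (and_iff_right (conjCLE.differentiableAt.comp z hu)).trans ?_
    change pdy _ z = I • pdx _ z ↔ _
    rw [pdx_conj, pdy_conj, map_mul, map_neg, conj_I, smul_eq_mul, neg_neg]
  rw [hCR, (RingHom.injective _).eq_iff, wirt]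
  constructor <;> intro h
  · linear_combination 2 * I * h + pdy u z * I_sq
  · linear_combination (-I / 2) * h + (pdx u z / 2) * I_sq

theorem wirt_conj_eq_zero_iff_differentiableAt (hu : DifferentiableAt ℝ u z) :
    wirt (fun w => conj (u w)) z = 0 ↔ DifferentiableAt ℂ u z := by
  simpa using wirt_eq_zero_iff_differentiableAt_conj hu.star

end Wirtinger

/-- For a harmonic `u` on an open connected set `U`, `H_u ≡ 0` on `U` iff `u` is conformal,
i.e. `u` or its pointwise conjugate is holomorphic on `U`. -/
theorem stmt1 (U : Set ℂ) (hU : IsOpen U) (hUconn : IsConnected U) (u : ℂ → ℂ)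
    (hreg : ContDiffOn ℝ 2 u U)
    (hharm : ∀ z ∈ U, pdx (pdx u) z + pdy (pdy u) z = 0) :
    (∀ z ∈ U, hopf u z = 0) ↔
      (DifferentiableOn ℂ u U ∨
        DifferentiableOn ℂ (fun z => (starRingEnd ℂ) (u z)) U) := by
  have hC2 (z : ℂ) (hz : z ∈ U) : ContDiffAt ℝ 2 u z := hreg.contDiffAt (hU.mem_nhds hz)
  have hu (z : ℂ) (hz : z ∈ U) : DifferentiableAt ℝ u z :=
    (hC2 z hz).differentiableAt two_ne_zero
  have hφ : AnalyticOnNhd ℂ (wirt u) U := DifferentiableOn.analyticOnNhd (fun z hz =>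
    (differentiableAt_wirt_of_harmonic (hC2 z hz) (hharm z hz)).differentiableWithinAt) hU
  have hψ : AnalyticOnNhd ℂ (wirt fun w => conj (u w)) U := by
    refine DifferentiableOn.analyticOnNhd (fun z hz => ?_) hU
    have hΔ : pdx (pdx fun w => conj (u w)) z + pdy (pdy fun w => conj (u w)) z = 0 := by
      simp only [pdx_conj, pdy_conj, ← map_add, hharm z hz, map_zero]
    exact (differentiableAt_wirt_of_harmonic (conjCLE.contDiff.contDiffAt.comp z (hC2 z hz))
      hΔ).differentiableWithinAt
  constructor
  · intro hH
    rcases hφ.eq_zero_or_eq_zero_of_mul_eq_zero hψ hH hUconn.isPreconnected with h | h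
    · exact .inr fun z hz =>
        ((wirt_eq_zero_iff_differentiableAt_conj (hu z hz)).1 (h z hz)).differentiableWithinAt
    · exact .inl fun z hz =>
        ((wirt_conj_eq_zero_iff_differentiableAt (hu z hz)).1 (h z hz)).differentiableWithinAt
  · rintro (h | h) z hz
    · rw [hopf, (wirt_conj_eq_zero_iff_differentiableAt (hu z hz)).2
        (h.differentiableAt (hU.mem_nhds hz)), mul_zero]
    · rw [hopf, (wirt_eq_zero_iff_differentiableAt_conj (hu z hz)).2
        (h.differentiableAt (hU.mem_nhds hz)), zero_mul]
end

section
/- Let 0 < ρ < 1 and let u : Ā_ρ → ℂ be continuously differentiable on the closed annulus with |u(z)| = 1 for all z ∈ ∂A_ρ. Set p = deg(u, C₁) and q = deg(u, C_ρ). Then ∫_{A_ρ} ∂ₓu ∧ ∂_y u dx dy = π(p − q). -/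
open Complex MeasureTheory

/-!
Write `v(r, θ) = u(r e^{iθ})`. In polar coordinates `r (∂ₓu ∧ ∂_y u) = ∂_r v ∧ ∂_θ v`, so the
integral over the annulus is `∫_ρ^1 ∫_0^{2π} ∂_r v ∧ ∂_θ v dθ dr`, while
`2π deg(u, C_r) = G(r) := ∫_0^{2π} v ∧ ∂_θ v dθ`. Formally `G'(r) = 2 ∫ ∂_r v ∧ ∂_θ v`, after
integrating `v ∧ ∂_r∂_θ v` by parts in `θ`; since `u` is only `C¹`, the mixed derivative is never
formed: the integration by parts is done on difference quotients in `r`, and the limit is taken by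
dominated convergence. The fundamental theorem of calculus then gives `2 ∫∫ = G(1) - G(ρ)`.
-/

open Complex MeasureTheory Set Filter Topology Metric
open scoped Interval ComplexConjugate Real

lemma wedge_eq_im_conj_mul (a b : ℂ) : wedge a b = (conj a * b).im := by
  simp only [wedge, mul_im, conj_re, conj_im]; ring

lemma abs_wedge_le (a b : ℂ) : |wedge a b| ≤ ‖a‖ * ‖b‖ := by
  rw [wedge_eq_im_conj_mul, ← norm_conj a, ← norm_mul]
  exact abs_im_le_norm _

@[fun_prop]
lemma Continuous.wedge {X : Type*} [TopologicalSpace X] {f g : X → ℂ} (hf : Continuous f)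
    (hg : Continuous g) : Continuous fun x => wedge (f x) (g x) := by
  unfold _root_.wedge; fun_prop

@[fun_prop]
lemma ContinuousOn.wedge {X : Type*} [TopologicalSpace X] {f g : X → ℂ} {s : Set X}
    (hf : ContinuousOn f s) (hg : ContinuousOn g s) :
    ContinuousOn (fun x => wedge (f x) (g x)) s := by
  unfold _root_.wedge; fun_prop

lemma HasDerivAt.wedge {f g : ℝ → ℂ} {f' g' : ℂ} {x : ℝ} (hf : HasDerivAt f f' x)
    (hg : HasDerivAt g g' x) :
    HasDerivAt (fun t => wedge (f t) (g t)) (wedge f' (g x) + wedge (f x) g') x := by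
  have hre {h : ℝ → ℂ} {h' : ℂ} (hh : HasDerivAt h h' x) :
      HasDerivAt (fun t => (h t).re) h'.re x := reCLM.hasFDerivAt.comp_hasDerivAt x hh
  have him {h : ℝ → ℂ} {h' : ℂ} (hh : HasDerivAt h h' x) :
      HasDerivAt (fun t => (h t).im) h'.im x := imCLM.hasFDerivAt.comp_hasDerivAt x hh
  exact (((hre hf).mul (him hg)).sub ((him hf).mul (hre hg))).congr_deriv
    (by simp only [_root_.wedge]; ring)

lemma wedge_map_map (L : ℂ →L[ℝ] ℂ) (v w : ℂ) :
    wedge (L v) (L w) = wedge v w * wedge (L 1) (L I) := by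
  have hL : ∀ z : ℂ, L z = z.re • L 1 + z.im • L I := fun z => by
    rw [← map_smul, ← map_smul, ← map_add]; congr 1; simp
  rw [hL v, hL w]
  simp only [wedge, add_re, add_im, real_smul, mul_re, mul_im, ofReal_re, ofReal_im]
  ring

lemma wedge_exp_circleMap (r θ : ℝ) : wedge (exp (θ * I)) (circleMap 0 r θ * I) = r := by
  rw [wedge_eq_im_conj_mul, circleMap_zero]
  have : conj (exp (θ * I)) * (r * exp (θ * I) * I) = r * ‖exp (θ * I)‖ ^ 2 * I := by
    rw [← mul_conj']; ring
  rw [this, norm_exp_ofReal_mul_I]; simp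

lemma wedge_anticomm (a b : ℂ) : -wedge a b = wedge b a := by
  simp only [wedge]; ring

lemma wedge_smul_left (c : ℝ) (a b : ℂ) : wedge (c • a) b = c * wedge a b := by
  simp only [wedge, real_smul, mul_re, mul_im, ofReal_re, ofReal_im]; ring

lemma norm_two_mul_wedge_add_wedge_sub_le {x y z : ℂ} {M : ℝ} (hx : ‖x‖ ≤ M) (hy : ‖y‖ ≤ M)
    (hz : ‖z‖ ≤ M) : ‖2 * wedge x y + wedge x (z - y)‖ ≤ 4 * M * M := by
  have hM : 0 ≤ M := (norm_nonneg _).trans hx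
  rw [Real.norm_eq_abs]
  calc |2 * wedge x y + wedge x (z - y)| ≤ 2 * (‖x‖ * ‖y‖) + ‖x‖ * (‖z‖ + ‖y‖) := by
        refine (abs_add_le _ _).trans (add_le_add ?_ ((abs_wedge_le _ _).trans ?_))
        · rw [abs_mul, abs_two]; gcongr; exact abs_wedge_le x y
        · gcongr; exact norm_sub_le z y
    _ ≤ 2 * (M * M) + M * (M + M) := by gcongr
    _ = 4 * M * M := by ring

lemma norm_slope_le_of_norm_hasDerivWithin_le {E : Type*} [NormedAddCommGroup E]
    [NormedSpace ℝ E] {f f' : ℝ → E} {s : Set ℝ} {x y C : ℝ}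
    (hf : ∀ t ∈ s, HasDerivWithinAt f (f' t) s t) (bound : ∀ t ∈ s, ‖f' t‖ ≤ C)
    (hs : Convex ℝ s) (hx : x ∈ s) (hy : y ∈ s) : ‖slope f x y‖ ≤ C := by
  rcases eq_or_ne y x with rfl | hyx
  · simpa using (norm_nonneg _).trans (bound y hy)
  have hpos : 0 < ‖y - x‖ := norm_pos_iff.2 (sub_ne_zero.2 hyx)
  rw [slope_def_module, norm_smul, norm_inv, inv_mul_le_iff₀ hpos, mul_comm]
  exact hs.norm_image_sub_le_of_norm_hasDerivWithin_le hf bound hx hy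

theorem integral_wedge_deriv_swap {f g f' g' : ℝ → ℂ} {a b : ℝ}
    (hf : ∀ x ∈ [[a, b]], HasDerivAt f (f' x) x) (hg : ∀ x ∈ [[a, b]], HasDerivAt g (g' x) x)
    (hf' : ContinuousOn f' [[a, b]]) (hg' : ContinuousOn g' [[a, b]])
    (hfab : f b = f a) (hgab : g b = g a) :
    ∫ x in a..b, wedge (f x) (g' x) = ∫ x in a..b, wedge (g x) (f' x) := by
  have hfc : ContinuousOn f [[a, b]] := fun x hx => (hf x hx).continuousAt.continuousWithinAt
  have hgc : ContinuousOn g [[a, b]] := fun x hx => (hg x hx).continuousAt.continuousWithinAt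
  have hFTC : ∫ x in a..b, (wedge (f' x) (g x) + wedge (f x) (g' x)) = 0 := by
    rw [intervalIntegral.integral_eq_sub_of_hasDerivAt (fun x hx => (hf x hx).wedge (hg x hx))
      ((hf'.wedge hgc).add (hfc.wedge hg')).intervalIntegrable, hfab, hgab, sub_self]
  rw [intervalIntegral.integral_add (hf'.wedge hgc).intervalIntegrable
    (hfc.wedge hg').intervalIntegrable] at hFTC
  have hswap : ∫ x in a..b, wedge (g x) (f' x) = -∫ x in a..b, wedge (f' x) (g x) := by
    rw [← intervalIntegral.integral_neg]; simp only [wedge_anticomm]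
  linarith

section CircleFamily

variable {V Vr Vθ : ℝ → ℝ → ℂ} {a b T : ℝ}

lemma slope_integral_wedge
    (hVθ : ∀ r ∈ Icc a b, ∀ θ ∈ [[0, T]], HasDerivAt (V r) (Vθ r θ) θ)
    (hVθc : ContinuousOn (Function.uncurry Vθ) (Icc a b ×ˢ [[0, T]]))
    (hper : ∀ r ∈ Icc a b, V r T = V r 0) {r s : ℝ} (hr : r ∈ Icc a b) (hs : s ∈ Icc a b) :
    slope (fun t => ∫ θ in 0..T, wedge (V t θ) (Vθ t θ)) r s =
      ∫ θ in 0..T, (2 * wedge (slope (V · θ) r s) (Vθ r θ) +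
        wedge (slope (V · θ) r s) (Vθ s θ - Vθ r θ)) := by
  have hVc : ∀ t ∈ Icc a b, ContinuousOn (V t) [[0, T]] := fun t ht θ hθ =>
    (hVθ t ht θ hθ).continuousAt.continuousWithinAt
  have hr' := hVθc.uncurry_left r hr
  have hs' := hVθc.uncurry_left s hs
  -- the cross terms cancel after an integration by parts on the circle
  have hcross : ∫ θ in 0..T, wedge (V r θ) (Vθ s θ) = ∫ θ in 0..T, wedge (V s θ) (Vθ r θ) :=
    integral_wedge_deriv_swap (hVθ r hr) (hVθ s hs) hr' hs' (hper r hr) (hper s hs)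
  have hdiff : (∫ θ in 0..T, wedge (V s θ) (Vθ s θ)) - ∫ θ in 0..T, wedge (V r θ) (Vθ r θ) =
      ∫ θ in 0..T,
        (2 * wedge (V s θ - V r θ) (Vθ r θ) + wedge (V s θ - V r θ) (Vθ s θ - Vθ r θ)) := by
    rw [← intervalIntegral.integral_sub ((hVc s hs).wedge hs').intervalIntegrable
      ((hVc r hr).wedge hr').intervalIntegrable]
    have hsplit : ∀ θ, wedge (V s θ) (Vθ s θ) - wedge (V r θ) (Vθ r θ) =
        (2 * wedge (V s θ - V r θ) (Vθ r θ) + wedge (V s θ - V r θ) (Vθ s θ - Vθ r θ)) +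
          (wedge (V r θ) (Vθ s θ) - wedge (V s θ) (Vθ r θ)) := fun θ => by
      simp only [wedge, sub_re, sub_im]; ring
    simp only [hsplit]
    rw [intervalIntegral.integral_add, intervalIntegral.integral_sub, hcross, sub_self, add_zero]
    all_goals apply ContinuousOn.intervalIntegrable; fun_prop
  rw [slope_def_module, hdiff, smul_eq_mul, ← intervalIntegral.integral_const_mul]
  refine intervalIntegral.integral_congr fun θ _ => ?_
  simp only [slope_def_module, wedge_smul_left]
  ring

lemma hasDerivWithinAt_integral_wedge
    (hVr : ∀ r ∈ Icc a b, ∀ θ ∈ [[0, T]], HasDerivWithinAt (V · θ) (Vr r θ) (Icc a b) r)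
    (hVθ : ∀ r ∈ Icc a b, ∀ θ ∈ [[0, T]], HasDerivAt (V r) (Vθ r θ) θ)
    (hVrc : ContinuousOn (Function.uncurry Vr) (Icc a b ×ˢ [[0, T]]))
    (hVθc : ContinuousOn (Function.uncurry Vθ) (Icc a b ×ˢ [[0, T]]))
    (hper : ∀ r ∈ Icc a b, V r T = V r 0) {r : ℝ} (hr : r ∈ Icc a b) :
    HasDerivWithinAt (fun s => ∫ θ in 0..T, wedge (V s θ) (Vθ s θ))
      (2 * ∫ θ in 0..T, wedge (Vr r θ) (Vθ r θ)) (Icc a b) r := by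
  have hK : IsCompact (Icc a b ×ˢ [[0, T]]) := isCompact_Icc.prod isCompact_uIcc
  obtain ⟨Mr, hMr⟩ := hK.exists_bound_of_continuousOn hVrc
  obtain ⟨Mθ, hMθ⟩ := hK.exists_bound_of_continuousOn hVθc
  set M := max Mr Mθ
  have hVc : ∀ t ∈ Icc a b, ContinuousOn (V t) [[0, T]] := fun t ht θ hθ =>
    (hVθ t ht θ hθ).continuousAt.continuousWithinAt
  set D : ℝ → ℝ → ℂ := fun s θ => slope (V · θ) r s
  have hD : ∀ s ∈ Icc a b, ∀ θ ∈ [[0, T]], ‖D s θ‖ ≤ M := fun s hs θ hθ =>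
    norm_slope_le_of_norm_hasDerivWithin_le (fun t ht => hVr t ht θ hθ)
      (fun t ht => (hMr (t, θ) ⟨ht, hθ⟩).trans (le_max_left _ _)) (convex_Icc a b) hr hs
  have hθM : ∀ s ∈ Icc a b, ∀ θ ∈ [[0, T]], ‖Vθ s θ‖ ≤ M := fun s hs θ hθ =>
    (hMθ (s, θ) ⟨hs, hθ⟩).trans (le_max_right _ _)
  rw [hasDerivWithinAt_iff_tendsto_slope, ← intervalIntegral.integral_const_mul]
  refine (intervalIntegral.tendsto_integral_filter_of_dominated_convergence
    (F := fun s θ => 2 * wedge (D s θ) (Vθ r θ) + wedge (D s θ) (Vθ s θ - Vθ r θ))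
    (fun _ => 4 * M * M) ?_ ?_ intervalIntegrable_const ?_).congr' ?_
  · filter_upwards [self_mem_nhdsWithin] with s hs
    refine ContinuousOn.aestronglyMeasurable ?_ measurableSet_uIoc
    have : ContinuousOn (D s) [[0, T]] := by
      simp only [D, slope_def_module]
      exact continuousOn_const.smul ((hVc s hs.1).sub (hVc r hr))
    have hs' := hVθc.uncurry_left s hs.1
    have hr' := hVθc.uncurry_left r hr
    exact ContinuousOn.mono (by fun_prop) uIoc_subset_uIcc
  · filter_upwards [self_mem_nhdsWithin] with s hs
    refine ae_of_all _ fun θ hθ => ?_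
    have hθ' := uIoc_subset_uIcc hθ
    exact norm_two_mul_wedge_add_wedge_sub_le (hD s hs.1 θ hθ') (hθM r hr θ hθ') (hθM s hs.1 θ hθ')
  · refine ae_of_all _ fun θ hθ => ?_
    have hθ' := uIoc_subset_uIcc hθ
    have hslope : Tendsto (D · θ) (𝓝[Icc a b \ {r}] r) (𝓝 (Vr r θ)) :=
      hasDerivWithinAt_iff_tendsto_slope.mp (hVr r hr θ hθ')
    have hθcont : Tendsto (fun s => Vθ s θ - Vθ r θ) (𝓝[Icc a b \ {r}] r) (𝓝 0) := by
      have := ((hVθc.uncurry_right θ hθ') r hr).tendsto.sub_const (Vθ r θ)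
      rw [sub_self] at this
      exact this.mono_left (nhdsWithin_mono r sdiff_subset)
    have hF : Continuous fun p : ℂ × ℂ => 2 * wedge p.1 (Vθ r θ) + wedge p.1 p.2 := by fun_prop
    simpa [Function.comp_def, wedge] using (hF.tendsto (Vr r θ, 0)).comp (hslope.prodMk_nhds hθcont)
  · filter_upwards [self_mem_nhdsWithin] with s hs
    exact (slope_integral_wedge hVθ hVθc hper hr hs.1).symm

lemma continuousOn_integral_wedge
    (hVrc : ContinuousOn (Function.uncurry Vr) (Icc a b ×ˢ [[0, T]]))
    (hVθc : ContinuousOn (Function.uncurry Vθ) (Icc a b ×ˢ [[0, T]])) :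
    ContinuousOn (fun r => ∫ θ in 0..T, wedge (Vr r θ) (Vθ r θ)) (Icc a b) := by
  have hW : ContinuousOn (Function.uncurry fun r θ => wedge (Vr r θ) (Vθ r θ))
      (Icc a b ×ˢ [[0, T]]) := hVrc.wedge hVθc
  obtain ⟨M, hM⟩ := (isCompact_Icc.prod isCompact_uIcc).exists_bound_of_continuousOn hW
  intro r hr
  refine intervalIntegral.continuousWithinAt_of_dominated_interval (bound := fun _ => M) ?_ ?_
    intervalIntegrable_const (ae_of_all _ fun θ hθ => ?_)
  · filter_upwards [self_mem_nhdsWithin] with s hs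
    exact ((hW.uncurry_left s hs).mono uIoc_subset_uIcc).aestronglyMeasurable measurableSet_uIoc
  · filter_upwards [self_mem_nhdsWithin] with s hs
    exact ae_of_all _ fun θ hθ => hM (s, θ) ⟨hs, uIoc_subset_uIcc hθ⟩
  · exact hW.uncurry_right θ (uIoc_subset_uIcc hθ) r hr

theorem two_mul_integral_integral_wedge
    (hVr : ∀ r ∈ Icc a b, ∀ θ ∈ [[0, T]], HasDerivWithinAt (V · θ) (Vr r θ) (Icc a b) r)
    (hVθ : ∀ r ∈ Icc a b, ∀ θ ∈ [[0, T]], HasDerivAt (V r) (Vθ r θ) θ)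
    (hVrc : ContinuousOn (Function.uncurry Vr) (Icc a b ×ˢ [[0, T]]))
    (hVθc : ContinuousOn (Function.uncurry Vθ) (Icc a b ×ˢ [[0, T]]))
    (hper : ∀ r ∈ Icc a b, V r T = V r 0) (hab : a ≤ b) :
    2 * ∫ r in a..b, ∫ θ in 0..T, wedge (Vr r θ) (Vθ r θ) =
      (∫ θ in 0..T, wedge (V b θ) (Vθ b θ)) - ∫ θ in 0..T, wedge (V a θ) (Vθ a θ) := by
  have hG := fun r hr => hasDerivWithinAt_integral_wedge hVr hVθ hVrc hVθc hper (r := r) hr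
  rw [← intervalIntegral.integral_const_mul]
  refine intervalIntegral.integral_eq_sub_of_hasDeriv_right_of_le hab
    (fun r hr => (hG r hr).continuousWithinAt) (fun r hr => ?_)
    ((continuousOn_const.mul (continuousOn_integral_wedge hVrc hVθc)).intervalIntegrable_of_Icc hab)
  exact ((hG r (Ioo_subset_Icc_self hr)).hasDerivAt (Icc_mem_nhds hr.1 hr.2)).hasDerivWithinAt

end CircleFamily

section Annulus

variable {ρ : ℝ}

lemma isOpen_ann (ρ : ℝ) : IsOpen (ann ρ) := isOpen_Ioo.preimage continuous_norm

lemma ann_subset_cann (ρ : ℝ) : ann ρ ⊆ cann ρ := fun _ hz => ⟨hz.1.le, hz.2.le⟩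

lemma circleMap_mem_cann (hρ : 0 ≤ ρ) {r : ℝ} (hr : r ∈ Icc ρ 1) (θ : ℝ) :
    circleMap 0 r θ ∈ cann ρ := by
  rw [cann, mem_ofPred_eq, norm_circleMap_zero, abs_of_nonneg (hρ.trans hr.1)]
  exact hr

lemma uniqueDiffOn_cann (hρ0 : 0 < ρ) (hρ1 : ρ < 1) : UniqueDiffOn ℝ (cann ρ) := by
  intro z hz
  have hz0 : 0 < ‖z‖ := hρ0.trans_le hz.1
  -- a closed ball of radius `(1 - ρ) / 2`, centred on the mid-circle of the annulus, through `z`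
  set c : ℂ := ((1 + ρ) / 2 / ‖z‖ : ℝ) • z
  have hc : ‖c‖ = (1 + ρ) / 2 := by
    rw [norm_smul, Real.norm_of_nonneg (by positivity), div_mul_cancel₀ _ hz0.ne']
  have hsub : closedBall c ((1 - ρ) / 2) ⊆ cann ρ := fun w hw => by
    have := (abs_norm_sub_norm_le w c).trans (mem_closedBall_iff_norm.1 hw)
    rw [hc, abs_le] at this
    constructor <;> linarith
  have hzc : z ∈ closedBall c ((1 - ρ) / 2) := by
    rw [mem_closedBall_iff_norm]
    have : z - c = (1 - (1 + ρ) / 2 / ‖z‖ : ℝ) • z := by simp only [c, sub_smul, one_smul]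
    rw [this, norm_smul, Real.norm_eq_abs, ← abs_of_pos hz0, ← abs_mul, abs_of_pos hz0, sub_mul,
      div_mul_cancel₀ _ hz0.ne', one_mul, abs_le]
    constructor <;> linarith [hz.1, hz.2]
  refine (uniqueDiffOn_convex (convex_closedBall c _) ?_ z hzc).mono hsub
  rw [interior_closedBall c (by linarith)]
  exact ⟨c, mem_ball_self (by linarith)⟩

lemma polarCoord_symm_eq_circleMap (p : ℝ × ℝ) :
    Complex.polarCoord.symm p = circleMap 0 p.1 p.2 := by
  rw [Complex.polarCoord_symm_apply, circleMap_zero, exp_mul_I, ← ofReal_cos, ← ofReal_sin]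

lemma integral_Ioo_neg_pi_pi_of_periodic {E : Type*} [NormedAddCommGroup E] [NormedSpace ℝ E]
    {g : ℝ → E} (hg : Function.Periodic g (2 * π)) :
    ∫ θ in Ioo (-π) π, g θ = ∫ θ in 0..2 * π, g θ := by
  rw [← integral_Ioc_eq_integral_Ioo, ← intervalIntegral.integral_of_le (by linarith [Real.pi_pos]),
    ← zero_add (2 * π), ← hg.intervalIntegral_add_eq (-π) 0]
  ring_nf

theorem setIntegral_ann_eq_integral_circleMap {E : Type*} [NormedAddCommGroup E]
    [NormedSpace ℝ E] {f : ℂ → E} (hρ0 : 0 ≤ ρ) (hρ1 : ρ ≤ 1) (hf : ContinuousOn f (cann ρ)) :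
    ∫ z in ann ρ, f z = ∫ r in ρ..1, ∫ θ in 0..2 * π, r • f (circleMap 0 r θ) := by
  set F : ℝ × ℝ → E := fun p => p.1 • f (circleMap 0 p.1 p.2)
  set S : Set (ℝ × ℝ) := Ioo ρ 1 ×ˢ Ioo (-π) π
  have hS : S ⊆ Complex.polarCoord.target := by
    rw [Complex.polarCoord_target]
    exact prod_mono (fun r hr => hρ0.trans_lt hr.1) subset_rfl
  have hindicator : ∀ p ∈ Complex.polarCoord.target,
      p.1 • (ann ρ).indicator f (Complex.polarCoord.symm p) = S.indicator F p := by
    rintro ⟨r, θ⟩ ⟨hr, hθ⟩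
    have hmem : circleMap 0 r θ ∈ ann ρ ↔ (r, θ) ∈ S := by
      simp only [S, ann, mem_prod, mem_ofPred_eq, norm_circleMap_zero, abs_of_pos (mem_Ioi.1 hr),
        mem_Ioo, hθ, and_true]
    rw [polarCoord_symm_eq_circleMap]
    by_cases h : (r, θ) ∈ S
    · rw [indicator_of_mem (hmem.2 h), indicator_of_mem h]
    · rw [indicator_of_notMem (mt hmem.1 h), indicator_of_notMem h, smul_zero]
  have hFint : IntegrableOn F S := by
    refine ContinuousOn.integrableOn_compact (isCompact_Icc.prod isCompact_Icc) ?_ |>.mono_set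
      (prod_mono Ioo_subset_Icc_self Ioo_subset_Icc_self)
    exact continuousOn_fst.smul (hf.comp Real.circleMap.continuous.continuousOn
      fun p hp => circleMap_mem_cann hρ0 hp.1 p.2)
  rw [Measure.volume_eq_prod] at hFint
  calc ∫ z in ann ρ, f z = ∫ z, (ann ρ).indicator f z :=
        (integral_indicator (isOpen_ann ρ).measurableSet).symm
    _ = ∫ p in Complex.polarCoord.target, p.1 • (ann ρ).indicator f (Complex.polarCoord.symm p) :=
        (Complex.integral_comp_polarCoord_symm _).symm
    _ = ∫ p in S, F p := by
        rw [setIntegral_congr_fun Complex.polarCoord.open_target.measurableSet hindicator,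
          setIntegral_indicator (measurableSet_Ioo.prod measurableSet_Ioo), inter_eq_right.2 hS]
    _ = ∫ r in Ioo ρ 1, ∫ θ in Ioo (-π) π, r • f (circleMap 0 r θ) := by
        rw [Measure.volume_eq_prod, setIntegral_prod _ hFint]
    _ = ∫ r in ρ..1, ∫ θ in 0..2 * π, r • f (circleMap 0 r θ) := by
        rw [intervalIntegral.integral_of_le hρ1, integral_Ioc_eq_integral_Ioo]
        congr 1; ext r
        exact integral_Ioo_neg_pi_pi_of_periodic ((periodic_circleMap 0 r).comp fun z => r • f z)

lemma hasDerivAt_circleMap_radius (c : ℂ) (R θ : ℝ) :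
    HasDerivAt (fun r : ℝ => circleMap c r θ) (exp (θ * I)) R := by
  simpa [circleMap] using ((ofRealCLM.hasDerivAt (x := R)).mul_const (exp (θ * I))).const_add c

lemma degCirc_eq_of_hasDerivAt {u : ℂ → ℂ} {r : ℝ} {g : ℝ → ℂ}
    (h : ∀ θ, HasDerivAt (fun t => u (circleMap 0 r t)) (g θ) θ) :
    degCirc u r = 1 / (2 * π) * ∫ θ in 0..2 * π, wedge (u (circleMap 0 r θ)) (g θ) := by
  have hcm : ∀ t : ℝ, (r : ℂ) * exp (I * t) = circleMap 0 r t := fun t => by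
    rw [circleMap_zero, mul_comm I]
  simp only [degCirc, hcm, (h _).deriv]

theorem integral_ann_wedge_eq_pi_mul_degCirc_sub {u : ℂ → ℂ} {f' : ℂ → ℂ →L[ℝ] ℂ}
    (hρ0 : 0 < ρ) (hρ1 : ρ < 1) (hd : ∀ z ∈ cann ρ, HasFDerivWithinAt u (f' z) (cann ρ) z)
    (hc : ContinuousOn f' (cann ρ)) :
    ∫ z in ann ρ, wedge (f' z 1) (f' z I) = π * (degCirc u 1 - degCirc u ρ) := by
  have hmem : ∀ {r}, r ∈ Icc ρ 1 → ∀ θ, circleMap 0 r θ ∈ cann ρ := circleMap_mem_cann hρ0.le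
  have hVθ : ∀ r ∈ Icc ρ 1, ∀ θ, HasDerivAt (fun t => u (circleMap 0 r t))
      (f' (circleMap 0 r θ) (circleMap 0 r θ * I)) θ := fun r hr θ =>
    hasDerivWithinAt_univ.mp <| (hd _ (hmem hr θ)).comp_hasDerivWithinAt θ
      (hasDerivAt_circleMap 0 r θ).hasDerivWithinAt fun t _ => hmem hr t
  have hVr : ∀ r ∈ Icc ρ 1, ∀ θ ∈ [[0, 2 * π]], HasDerivWithinAt (fun s => u (circleMap 0 s θ))
      (f' (circleMap 0 r θ) (exp (θ * I))) (Icc ρ 1) r := fun r hr θ _ =>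
    (hd _ (hmem hr θ)).comp_hasDerivWithinAt r
      (hasDerivAt_circleMap_radius 0 r θ).hasDerivWithinAt fun s hs => hmem hs θ
  have hf'c : ContinuousOn (fun p : ℝ × ℝ => f' (circleMap 0 p.1 p.2)) (Icc ρ 1 ×ˢ [[0, 2 * π]]) :=
    hc.comp Real.circleMap.continuous.continuousOn fun p hp => hmem hp.1 p.2
  have hper : ∀ r ∈ Icc ρ 1, u (circleMap 0 r (2 * π)) = u (circleMap 0 r 0) := fun r _ => by
    rw [← zero_add (2 * π), periodic_circleMap]
  have hFTC := two_mul_integral_integral_wedge hVr (fun r hr θ _ => hVθ r hr θ)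
    (hf'c.clm_apply (by fun_prop)) (hf'c.clm_apply (by fun_prop)) hper hρ1.le
  calc ∫ z in ann ρ, wedge (f' z 1) (f' z I)
      = ∫ r in ρ..1, ∫ θ in 0..2 * π, r • wedge (f' (circleMap 0 r θ) 1) (f' (circleMap 0 r θ) I) :=
        setIntegral_ann_eq_integral_circleMap hρ0.le hρ1.le ((hc.clm_apply continuousOn_const).wedge
          (hc.clm_apply continuousOn_const))
    _ = ∫ r in ρ..1, ∫ θ in 0..2 * π, wedge (f' (circleMap 0 r θ) (exp (θ * I)))
          (f' (circleMap 0 r θ) (circleMap 0 r θ * I)) := by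
        refine intervalIntegral.integral_congr fun r _ =>
          intervalIntegral.integral_congr fun θ _ => ?_
        rw [wedge_map_map _ (exp (θ * I)), wedge_exp_circleMap, smul_eq_mul]
    _ = π * (degCirc u 1 - degCirc u ρ) := by
        rw [degCirc_eq_of_hasDerivAt (hVθ 1 ⟨hρ1.le, le_rfl⟩),
          degCirc_eq_of_hasDerivAt (hVθ ρ ⟨le_rfl, hρ1.le⟩), ← mul_sub, ← hFTC]
        generalize ∫ r in ρ..1, ∫ θ in 0..2 * π, wedge _ _ = X
        field_simp

end Annulus

theorem stmt3_general (ρ : ℝ) (hρ0 : 0 < ρ) (hρ1 : ρ < 1) (u : ℂ → ℂ)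
    (hreg : ContDiffOn ℝ 1 u (cann ρ))
    (p q : ℝ) (hp : p = degCirc u 1) (hq : q = degCirc u ρ) :
    ∫ z in ann ρ, wedge (pdx u z) (pdy u z) = Real.pi * (p - q) := by
  have hd : ∀ z ∈ cann ρ, HasFDerivWithinAt u (fderivWithin ℝ u (cann ρ) z) (cann ρ) z :=
    fun z hz => (hreg.differentiableOn one_ne_zero z hz).hasFDerivWithinAt
  have hc := hreg.continuousOn_fderivWithin (uniqueDiffOn_cann hρ0 hρ1) le_rfl
  have hpartials : ∀ z ∈ ann ρ, wedge (pdx u z) (pdy u z) =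
      wedge (fderivWithin ℝ u (cann ρ) z 1) (fderivWithin ℝ u (cann ρ) z I) := fun z hz => by
    rw [pdx, pdy, fderivWithin_of_mem_nhds
      (mem_of_superset ((isOpen_ann ρ).mem_nhds hz) (ann_subset_cann ρ))]
  rw [setIntegral_congr_fun (isOpen_ann ρ).measurableSet hpartials,
    integral_ann_wedge_eq_pi_mul_degCirc_sub hρ0 hρ1 hd hc, hp, hq]

/-- `∫_{A_ρ} ∂ₓu ∧ ∂_y u = π(p − q)` where `p, q` are the boundary degrees. -/
theorem stmt3 (ρ : ℝ) (hρ0 : 0 < ρ) (hρ1 : ρ < 1) (u : ℂ → ℂ)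
    (hreg : ContDiffOn ℝ 1 u (cann ρ))
    (hmod : ∀ z ∈ bdry ρ, ‖u z‖ = 1)
    (p q : ℝ) (hp : p = degCirc u 1) (hq : q = degCirc u ρ) :
    ∫ z in ann ρ, wedge (pdx u z) (pdy u z) = Real.pi * (p - q) :=
  stmt3_general ρ hρ0 hρ1 u hreg p q hp hq
end

section
/- Let 0 < ρ < 1 and let x ∈ ℂ with ρ < |x| < 1. Then for every z with ρ ≤ |z| ≤ 1 the infinite product defining f_x(z) converges (each of the factor sequences is multipliable), all its factors and its zeroth-order denominator are nonzero except for the single zero factor at z = x, and for every z with ρ ≤ |z| ≤ 1 and z ≠ x one has the identities f_x(z) · f_{x̄}(1/z) = 1/|x|² and f_x(z) · f_{x̄}(ρ²/z) = 1. -/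
open Complex MeasureTheory

/-- The `k`-th factor of the infinite product defining `f_x`. -/
noncomputable def fxFactor (ρ : ℝ) (x z : ℂ) (k : ℕ) : ℂ :=
  ((1 - (ρ : ℂ) ^ (2 * k) * z / x) * (1 - (ρ : ℂ) ^ (2 * k) * x / z)) /
    ((1 - (ρ : ℂ) ^ (2 * k) / (z * (starRingEnd ℂ) x)) *
      (1 - (ρ : ℂ) ^ (2 * k) * z * (starRingEnd ℂ) x))

/-- `f_x(z) = [(1 − z/x)/(1 − z·x̄)] · ∏_{k=1}^{∞} fxFactor ρ x z k`. -/
noncomputable def fx (ρ : ℝ) (x z : ℂ) : ℂ :=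
  ((1 - z / x) / (1 - z * (starRingEnd ℂ) x)) * ∏' k : ℕ, fxFactor ρ x z (k + 1)

/-! With `q = ρ²`, `a = z/x`, `b = x/z` and `w = z·x̄`, the function `f_x(z)` is the quotient
`(a; q)_∞ (qb; q)_∞ / ((q/w; q)_∞ (w; q)_∞)` of q-Pochhammer symbols. Replacing `(x, z)` by
`(x̄, ρ²/z)` just swaps numerator and denominator, which gives the second identity. Replacing
`(x, z)` by `(x̄, 1/z)` produces the same symbols up to the shift `(c; q)_∞ = (1 - c)(qc; q)_∞`,
so the product collapses to `(1 - a)(1 - 1/w) / ((1 - b)(1 - w)) = 1/|x|²`. -/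

open Complex ComplexConjugate

/-- The q-Pochhammer symbol `(c; q)_∞`. -/
noncomputable def qPochhammer (c q : ℂ) : ℂ := ∏' k : ℕ, (1 - c * q ^ k)

section qPochhammer

variable {c q : ℂ}

lemma norm_mul_lt_one_of_norm_le_one (hq : ‖q‖ ≤ 1) (hc : ‖c‖ < 1) : ‖q * c‖ < 1 := by
  rw [norm_mul]
  exact (mul_le_of_le_one_left (norm_nonneg c) hq).trans_lt hc

lemma one_sub_mul_pow_ne_zero (hq : ‖q‖ ≤ 1) (hc : ‖c‖ < 1) (k : ℕ) : 1 - c * q ^ k ≠ 0 := by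
  have hlt : ‖q ^ k * c‖ < 1 := by
    rw [norm_mul, norm_pow]
    exact (mul_le_of_le_one_left (norm_nonneg c) (pow_le_one₀ (norm_nonneg q) hq)).trans_lt hc
  intro h
  rw [mul_comm, ← sub_eq_zero.mp h, norm_one] at hlt
  exact lt_irrefl 1 hlt

lemma summable_norm_neg_mul_pow (hq : ‖q‖ < 1) : Summable fun k : ℕ => ‖-(c * q ^ k)‖ := by
  simpa [norm_mul, norm_pow] using (summable_geometric_of_lt_one (norm_nonneg q) hq).mul_left ‖c‖

lemma hasProd_qPochhammer (hq : ‖q‖ < 1) :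
    HasProd (fun k : ℕ => 1 - c * q ^ k) (qPochhammer c q) := by
  have h := (multipliable_one_add_of_summable (summable_norm_neg_mul_pow (c := c) hq)).hasProd
  simp only [← sub_eq_add_neg] at h
  exact h

lemma qPochhammer_eq_one_sub_mul (hq : ‖q‖ < 1) :
    qPochhammer c q = (1 - c) * qPochhammer (q * c) q := by
  have hshift : (fun k : ℕ => 1 - c * q ^ (k + 1)) = fun k => 1 - q * c * q ^ k := by
    funext k; ring
  rw [qPochhammer, tprod_eq_zero_mul', pow_zero, mul_one, hshift, ← qPochhammer]
  simpa only [hshift] using (hasProd_qPochhammer (c := q * c) hq).multipliable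

lemma qPochhammer_ne_zero (hq : ‖q‖ < 1) (hc : ‖c‖ < 1) : qPochhammer c q ≠ 0 := by
  simpa only [qPochhammer, ← sub_eq_add_neg] using
    tprod_one_add_ne_zero_of_summable
      (fun k => by simpa only [← sub_eq_add_neg] using one_sub_mul_pow_ne_zero hq.le hc k)
      (summable_norm_neg_mul_pow hq)

end qPochhammer

section fx

variable {ρ : ℝ} {x z : ℂ}

lemma fxFactor_succ_eq (k : ℕ) :
    fxFactor ρ x z (k + 1) =
      (1 - (ρ : ℂ) ^ 2 * (z / x) * ((ρ : ℂ) ^ 2) ^ k) *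
          (1 - (ρ : ℂ) ^ 2 * (x / z) * ((ρ : ℂ) ^ 2) ^ k) /
        ((1 - (ρ : ℂ) ^ 2 * (z * conj x)⁻¹ * ((ρ : ℂ) ^ 2) ^ k) *
          (1 - (ρ : ℂ) ^ 2 * (z * conj x) * ((ρ : ℂ) ^ 2) ^ k)) := by
  rw [fxFactor]
  ring

lemma hasProd_fxFactor_succ (hq : ‖(ρ : ℂ) ^ 2‖ < 1)
    (hw : qPochhammer ((ρ : ℂ) ^ 2 * (z * conj x)⁻¹) ((ρ : ℂ) ^ 2) ≠ 0)
    (hw' : qPochhammer ((ρ : ℂ) ^ 2 * (z * conj x)) ((ρ : ℂ) ^ 2) ≠ 0) :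
    HasProd (fun k => fxFactor ρ x z (k + 1))
      (qPochhammer ((ρ : ℂ) ^ 2 * (z / x)) ((ρ : ℂ) ^ 2) *
          qPochhammer ((ρ : ℂ) ^ 2 * (x / z)) ((ρ : ℂ) ^ 2) /
        (qPochhammer ((ρ : ℂ) ^ 2 * (z * conj x)⁻¹) ((ρ : ℂ) ^ 2) *
          qPochhammer ((ρ : ℂ) ^ 2 * (z * conj x)) ((ρ : ℂ) ^ 2))) := by
  simpa only [fxFactor_succ_eq] using
    ((hasProd_qPochhammer hq).mul (hasProd_qPochhammer hq)).div₀
      ((hasProd_qPochhammer hq).mul (hasProd_qPochhammer hq)) (mul_ne_zero hw hw')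

lemma fx_eq_qPochhammer (hq : ‖(ρ : ℂ) ^ 2‖ < 1)
    (hw : qPochhammer ((ρ : ℂ) ^ 2 * (z * conj x)⁻¹) ((ρ : ℂ) ^ 2) ≠ 0)
    (hw' : qPochhammer ((ρ : ℂ) ^ 2 * (z * conj x)) ((ρ : ℂ) ^ 2) ≠ 0) :
    fx ρ x z =
      qPochhammer (z / x) ((ρ : ℂ) ^ 2) * qPochhammer ((ρ : ℂ) ^ 2 * (x / z)) ((ρ : ℂ) ^ 2) /
        (qPochhammer ((ρ : ℂ) ^ 2 * (z * conj x)⁻¹) ((ρ : ℂ) ^ 2) *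
          qPochhammer (z * conj x) ((ρ : ℂ) ^ 2)) := by
  rw [fx, (hasProd_fxFactor_succ hq hw hw').tprod_eq, qPochhammer_eq_one_sub_mul hq (c := z / x),
    qPochhammer_eq_one_sub_mul hq (c := z * conj x)]
  simp only [div_eq_mul_inv, mul_inv]
  ring

lemma fx_conj_one_div_eq_qPochhammer (hq : ‖(ρ : ℂ) ^ 2‖ < 1)
    (ha : qPochhammer ((ρ : ℂ) ^ 2 * (z / x)) ((ρ : ℂ) ^ 2) ≠ 0)
    (hb : qPochhammer ((ρ : ℂ) ^ 2 * (x / z)) ((ρ : ℂ) ^ 2) ≠ 0) :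
    fx ρ (conj x) (1 / z) =
      qPochhammer (z * conj x)⁻¹ ((ρ : ℂ) ^ 2) *
          qPochhammer ((ρ : ℂ) ^ 2 * (z * conj x)) ((ρ : ℂ) ^ 2) /
        (qPochhammer ((ρ : ℂ) ^ 2 * (z / x)) ((ρ : ℂ) ^ 2) * qPochhammer (x / z) ((ρ : ℂ) ^ 2)) := by
  have h₁ : 1 / z / conj x = (z * conj x)⁻¹ := by ring
  have h₂ : conj x / (1 / z) = z * conj x := by rw [div_div_eq_mul_div, div_one, mul_comm]
  have h₃ : (1 / z * conj (conj x))⁻¹ = z / x := by rw [conj_conj, one_div_mul_eq_div, inv_div]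
  have h₄ : 1 / z * conj (conj x) = x / z := by rw [conj_conj]; ring
  rw [fx_eq_qPochhammer hq (by rwa [h₃]) (by rwa [h₄]), h₁, h₂, h₃, h₄]

lemma fx_conj_sq_div_eq_qPochhammer (hρ : ρ ≠ 0) (hq : ‖(ρ : ℂ) ^ 2‖ < 1)
    (ha : qPochhammer (z / x) ((ρ : ℂ) ^ 2) ≠ 0)
    (hb : qPochhammer ((ρ : ℂ) ^ 2 * ((ρ : ℂ) ^ 2 * (x / z))) ((ρ : ℂ) ^ 2) ≠ 0) :
    fx ρ (conj x) ((ρ : ℂ) ^ 2 / z) =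
      qPochhammer ((ρ : ℂ) ^ 2 * (z * conj x)⁻¹) ((ρ : ℂ) ^ 2) *
          qPochhammer (z * conj x) ((ρ : ℂ) ^ 2) /
        (qPochhammer (z / x) ((ρ : ℂ) ^ 2) *
          qPochhammer ((ρ : ℂ) ^ 2 * (x / z)) ((ρ : ℂ) ^ 2)) := by
  have hρ' : (ρ : ℂ) ≠ 0 := ofReal_ne_zero.mpr hρ
  have h₁ : (ρ : ℂ) ^ 2 / z / conj x = (ρ : ℂ) ^ 2 * (z * conj x)⁻¹ := by ring
  have h₂ : (ρ : ℂ) ^ 2 * (conj x / ((ρ : ℂ) ^ 2 / z)) = z * conj x := by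
    rw [div_div_eq_mul_div, mul_div_assoc', mul_div_cancel_left₀ _ (pow_ne_zero 2 hρ'), mul_comm]
  have h₃ : (ρ : ℂ) ^ 2 * ((ρ : ℂ) ^ 2 / z * conj (conj x))⁻¹ = z / x := by
    rw [conj_conj, div_mul_eq_mul_div, inv_div, mul_div_assoc', mul_div_mul_left _ _ (pow_ne_zero 2 hρ')]
  have h₄ : (ρ : ℂ) ^ 2 / z * conj (conj x) = (ρ : ℂ) ^ 2 * (x / z) := by rw [conj_conj]; ring
  rw [fx_eq_qPochhammer hq (by rwa [h₃]) (by rwa [h₄]), h₁, h₂, h₃, h₄]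

end fx

section annulus

variable {ρ : ℝ} {u v x z : ℂ}
lemma norm_ofReal_sq_mul_div_lt_one (hρ0 : 0 < ρ) (hρ1 : ρ < 1) (hu : ‖u‖ ≤ 1) (hv : ρ ≤ ‖v‖) :
    ‖(ρ : ℂ) ^ 2 * (u / v)‖ < 1 := by
  have hv0 : 0 < ‖v‖ := hρ0.trans_le hv
  rw [norm_mul, norm_div, norm_pow, norm_real, Real.norm_of_nonneg hρ0.le, mul_div_assoc',
    div_lt_one hv0]
  nlinarith [norm_nonneg u]

lemma norm_ofReal_sq_mul_inv_lt_one (hρ0 : 0 < ρ) (hu : ρ ≤ ‖u‖) (hv : ρ < ‖v‖) :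
    ‖(ρ : ℂ) ^ 2 * (u * v)⁻¹‖ < 1 := by
  have huv : ρ ^ 2 < ‖u‖ * ‖v‖ := by nlinarith
  rw [norm_mul, norm_inv, norm_mul, norm_pow, norm_real, Real.norm_of_nonneg hρ0.le, ← div_eq_mul_inv,
    div_lt_one ((pow_pos hρ0 2).trans huv)]
  exact huv

lemma norm_lt_one_of_mem_annulus (hρ0 : 0 < ρ) (hρ1 : ρ < 1) (hx : x ∈ ann ρ) (hz : z ∈ cann ρ) :
    ‖(ρ : ℂ) ^ 2‖ < 1 ∧ ‖(ρ : ℂ) ^ 2 * (z / x)‖ < 1 ∧ ‖(ρ : ℂ) ^ 2 * (x / z)‖ < 1 ∧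
      ‖(ρ : ℂ) ^ 2 * (z * conj x)⁻¹‖ < 1 ∧ ‖z * conj x‖ < 1 := by
  obtain ⟨hxρ, hx1⟩ := hx
  obtain ⟨hzρ, hz1⟩ := hz
  refine ⟨?_, norm_ofReal_sq_mul_div_lt_one hρ0 hρ1 hz1 hxρ.le,
    norm_ofReal_sq_mul_div_lt_one hρ0 hρ1 hx1.le hzρ,
    norm_ofReal_sq_mul_inv_lt_one hρ0 hzρ (by rwa [norm_conj]), ?_⟩
  · rw [norm_pow, norm_real, Real.norm_of_nonneg hρ0.le]
    exact pow_lt_one₀ hρ0.le hρ1 two_ne_zero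
  · rw [norm_mul, norm_conj]
    exact mul_lt_one_of_nonneg_of_lt_one_right hz1 (norm_nonneg x) hx1

lemma fx_mul_fx_conj_one_div (hρ0 : 0 < ρ) (hρ1 : ρ < 1) (hx : x ∈ ann ρ) (hz : z ∈ cann ρ)
    (hzx : z ≠ x) : fx ρ x z * fx ρ (conj x) (1 / z) = 1 / (‖x‖ : ℂ) ^ 2 := by
  obtain ⟨hq, ha, hb, hw', hw⟩ := norm_lt_one_of_mem_annulus hρ0 hρ1 hx hz
  have hx0 : x ≠ 0 := norm_pos_iff.mp (hρ0.trans hx.1)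
  have hz0 : z ≠ 0 := norm_pos_iff.mp (hρ0.trans_le hz.1)
  have hb0 : 1 - x / z ≠ 0 := by
    rw [sub_ne_zero, ne_comm, ne_eq, div_eq_one_iff_eq hz0]; exact hzx.symm
  have hw0 : 1 - z * conj x ≠ 0 := by simpa using one_sub_mul_pow_ne_zero hq.le hw 0
  have hPa := qPochhammer_ne_zero hq ha
  have hPb := qPochhammer_ne_zero hq hb
  have hPw' := qPochhammer_ne_zero hq hw'
  have hPqw := qPochhammer_ne_zero hq (norm_mul_lt_one_of_norm_le_one hq.le hw)
  rw [fx_eq_qPochhammer hq hPw' hPqw, fx_conj_one_div_eq_qPochhammer hq hPa hPb,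
    qPochhammer_eq_one_sub_mul hq (c := z / x), qPochhammer_eq_one_sub_mul hq (c := x / z),
    qPochhammer_eq_one_sub_mul hq (c := (z * conj x)⁻¹),
    qPochhammer_eq_one_sub_mul hq (c := z * conj x), ← mul_conj']
  generalize qPochhammer ((ρ : ℂ) ^ 2 * (z / x)) ((ρ : ℂ) ^ 2) = A at hPa ⊢
  generalize qPochhammer ((ρ : ℂ) ^ 2 * (x / z)) ((ρ : ℂ) ^ 2) = B at hPb ⊢
  generalize qPochhammer ((ρ : ℂ) ^ 2 * (z * conj x)⁻¹) ((ρ : ℂ) ^ 2) = C at hPw' ⊢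
  generalize qPochhammer ((ρ : ℂ) ^ 2 * (z * conj x)) ((ρ : ℂ) ^ 2) = D at hPqw ⊢
  have hx0' : conj x ≠ 0 := (map_ne_zero _).mpr hx0
  field_simp
  ring

lemma fx_mul_fx_conj_sq_div (hρ0 : 0 < ρ) (hρ1 : ρ < 1) (hx : x ∈ ann ρ) (hz : z ∈ cann ρ)
    (hzx : z ≠ x) : fx ρ x z * fx ρ (conj x) ((ρ : ℂ) ^ 2 / z) = 1 := by
  obtain ⟨hq, ha, hb, hw', hw⟩ := norm_lt_one_of_mem_annulus hρ0 hρ1 hx hz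
  have hx0 : x ≠ 0 := norm_pos_iff.mp (hρ0.trans hx.1)
  have hPa0 : qPochhammer (z / x) ((ρ : ℂ) ^ 2) ≠ 0 := by
    rw [qPochhammer_eq_one_sub_mul hq]
    refine mul_ne_zero ?_ (qPochhammer_ne_zero hq ha)
    rw [sub_ne_zero, ne_comm, ne_eq, div_eq_one_iff_eq hx0]; exact hzx
  rw [fx_eq_qPochhammer hq (qPochhammer_ne_zero hq hw')
      (qPochhammer_ne_zero hq (norm_mul_lt_one_of_norm_le_one hq.le hw)),
    fx_conj_sq_div_eq_qPochhammer hρ0.ne' hq hPa0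
      (qPochhammer_ne_zero hq (norm_mul_lt_one_of_norm_le_one hq.le hb)),
    div_mul_div_comm, div_eq_one_iff_eq]
  · ring
  · exact mul_ne_zero (mul_ne_zero (qPochhammer_ne_zero hq hw') (qPochhammer_ne_zero hq hw))
      (mul_ne_zero hPa0 (qPochhammer_ne_zero hq hb))

end annulus

/-- Convergence of the product defining `f_x`, nonvanishing of its factors (except the single
zero factor at `z = x`), and the two product identities. -/
theorem stmt7 (ρ : ℝ) (hρ0 : 0 < ρ) (hρ1 : ρ < 1) (x : ℂ)
    (hx : ρ < ‖x‖ ∧ ‖x‖ < 1) :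
    ∀ z : ℂ, ρ ≤ ‖z‖ → ‖z‖ ≤ 1 →
      (Multipliable (fun k : ℕ => 1 - (ρ : ℂ) ^ (2 * (k + 1)) * z / x) ∧
       Multipliable (fun k : ℕ => 1 - (ρ : ℂ) ^ (2 * (k + 1)) * x / z) ∧
       Multipliable (fun k : ℕ => 1 - (ρ : ℂ) ^ (2 * (k + 1)) / (z * (starRingEnd ℂ) x)) ∧
       Multipliable (fun k : ℕ => 1 - (ρ : ℂ) ^ (2 * (k + 1)) * z * (starRingEnd ℂ) x) ∧
       Multipliable (fun k : ℕ => fxFactor ρ x z (k + 1))) ∧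
      ((1 - z * (starRingEnd ℂ) x ≠ 0) ∧
       (∀ k : ℕ,
          1 - (ρ : ℂ) ^ (2 * (k + 1)) * z / x ≠ 0 ∧
          1 - (ρ : ℂ) ^ (2 * (k + 1)) * x / z ≠ 0 ∧
          1 - (ρ : ℂ) ^ (2 * (k + 1)) / (z * (starRingEnd ℂ) x) ≠ 0 ∧
          1 - (ρ : ℂ) ^ (2 * (k + 1)) * z * (starRingEnd ℂ) x ≠ 0) ∧
       (1 - z / x = 0 ↔ z = x)) ∧
      (z ≠ x →
        fx ρ x z * fx ρ ((starRingEnd ℂ) x) (1 / z) = 1 / (‖x‖ : ℂ) ^ 2 ∧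
        fx ρ x z * fx ρ ((starRingEnd ℂ) x) ((ρ : ℂ) ^ 2 / z) = 1) := by
  intro z hzρ hz1
  obtain ⟨hq, ha, hb, hw', hw⟩ := norm_lt_one_of_mem_annulus hρ0 hρ1 hx ⟨hzρ, hz1⟩
  have hqw := norm_mul_lt_one_of_norm_le_one hq.le hw
  have hfactors := hasProd_fxFactor_succ hq (qPochhammer_ne_zero hq hw') (qPochhammer_ne_zero hq hqw)
  refine ⟨⟨?_, ?_, ?_, ?_, hfactors.multipliable⟩, ⟨?_, fun k => ⟨?_, ?_, ?_, ?_⟩, ?_⟩,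
    fun hzx => ⟨fx_mul_fx_conj_one_div hρ0 hρ1 hx ⟨hzρ, hz1⟩ hzx,
      fx_mul_fx_conj_sq_div hρ0 hρ1 hx ⟨hzρ, hz1⟩ hzx⟩⟩
  · exact (hasProd_qPochhammer (c := (ρ : ℂ) ^ 2 * (z / x)) hq).multipliable.congr fun k => by ring
  · exact (hasProd_qPochhammer (c := (ρ : ℂ) ^ 2 * (x / z)) hq).multipliable.congr fun k => by ring
  · exact (hasProd_qPochhammer (c := (ρ : ℂ) ^ 2 * (z * conj x)⁻¹) hq).multipliable.congr
      fun k => by ring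
  · exact (hasProd_qPochhammer (c := (ρ : ℂ) ^ 2 * (z * conj x)) hq).multipliable.congr
      fun k => by ring
  · simpa using one_sub_mul_pow_ne_zero hq.le hw 0
  · convert one_sub_mul_pow_ne_zero hq.le ha k using 1; ring
  · convert one_sub_mul_pow_ne_zero hq.le hb k using 1; ring
  · convert one_sub_mul_pow_ne_zero hq.le hw' k using 1; ring
  · convert one_sub_mul_pow_ne_zero hq.le hqw k using 1; ring
  · rw [sub_eq_zero, eq_comm, div_eq_one_iff_eq (norm_pos_iff.mp (hρ0.trans hx.1))]
end

section
/- Let 0 < ρ < 1, let p ≥ 1 be an integer and α ∈ ℂ with |α| = 1, and define u_p(z) = α(z^p + ρ^p·z̄^{−p})/(1 + ρ^p) for z ∈ Ā_ρ (so u_p(re^{iθ}) = α(r^p + ρ^p/r^p)e^{ipθ}/(1 + ρ^p)). Then Δu_p = 0 on A_ρ, |u_p(z)| = 1 for all z ∈ ∂A_ρ, u_p(z) ∧ ∂_r u_p(z) = 0 for all z ∈ ∂A_ρ, deg(u_p, C₁) = deg(u_p, C_ρ) = p, and the Dirichlet energy equals E(u_p) = 2πp(1 − ρ^p)/(1 +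 ρ^p). -/
open Complex MeasureTheory

/-!
Write `u_p = c z^p + c ρ^p z̄^{-p}` with `c = α / (1 + ρ^p)`. Every map `a z^m + b z̄^k` is harmonic
off `0`, being a holomorphic plus an antiholomorphic term, and its energy density
`|∂ₓu|² + |∂_y u|² = 2 (|a|² m² |z|^{2m-2} + |b|² k² |z|^{2k-2})` is radial, so polar coordinates
reduce its energy on `A_ρ` to `π (m |a|² (1 - ρ^{2m}) + k |b|² (1 - ρ^{2k}))`. On `|z| = r` one has
`z̄^{-p} = z^p / r^{2p}`, so `u_p` and `∂_r u_p` are real multiples of `c z^p`, whence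
`u_p ∧ ∂_r u_p = 0`; for `r ∈ {1, ρ}` the multiple is such that `u_p(z) = α (z / r)^p`, which has
modulus `1` and winds `p` times.
-/

open ComplexConjugate Topology Real

noncomputable def zpowConjZpow (a b : ℂ) (m k : ℤ) (z : ℂ) : ℂ := a * z ^ m + b * conj z ^ k

theorem conj_zpow_neg (z : ℂ) (n : ℤ) : conj z ^ (-n) = z ^ n / (‖z‖ : ℂ) ^ (2 * n) := by
  rw [zpow_neg, ← inv_zpow, inv_def, conj_conj, normSq_conj, normSq_eq_norm_sq, mul_zpow,
    div_eq_mul_inv, zpow_mul, ← inv_zpow]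
  push_cast
  rfl

theorem zpowConjZpow_neg_of_norm_eq (a b : ℂ) (n : ℤ) {z : ℂ} {r : ℝ} (hz : ‖z‖ = r) :
    zpowConjZpow a b n (-n) z = (a + b / (r : ℂ) ^ (2 * n)) * z ^ n := by
  rw [zpowConjZpow, conj_zpow_neg, hz]
  ring

section Derivatives

variable (a b : ℂ) (m k : ℤ) {z : ℂ}

theorem hasFDerivAt_zpowConjZpow (hz : z ≠ 0) :
    HasFDerivAt (zpowConjZpow a b m k)
      ((a * m * z ^ (m - 1)) • ContinuousLinearMap.id ℝ ℂ
        + (b * k * conj z ^ (k - 1)) • conjCLE.toContinuousLinearMap) z := by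
  have hz' : conj z ≠ 0 := by simpa using hz
  have hhol := ((hasDerivAt_zpow m z (.inl hz)).hasFDerivAt.restrictScalars ℝ).const_mul a
  have hanti := ((hasDerivAt_zpow k _ (.inl hz')).hasFDerivAt.restrictScalars ℝ).comp z
    conjCLE.hasFDerivAt |>.const_mul b
  refine (hhol.add hanti).congr_fderiv (ContinuousLinearMap.ext fun v => ?_)
  simp only [add_apply, smul_apply, ContinuousLinearMap.coe_restrictScalars',
    ContinuousLinearMap.toSpanSingleton_apply, smul_eq_mul, ContinuousLinearMap.comp_apply,
    ContinuousLinearEquiv.coe_coe, ContinuousAlgEquiv.coeCLE_apply, conjCAE_apply,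
    ContinuousLinearMap.id_apply]
  ring

theorem pdx_zpowConjZpow (hz : z ≠ 0) :
    pdx (zpowConjZpow a b m k) z = a * m * z ^ (m - 1) + b * k * conj z ^ (k - 1) := by
  simp [pdx, (hasFDerivAt_zpowConjZpow a b m k hz).fderiv]

theorem pdy_zpowConjZpow (hz : z ≠ 0) :
    pdy (zpowConjZpow a b m k) z = I * (a * m * z ^ (m - 1) - b * k * conj z ^ (k - 1)) := by
  simp [pdy, (hasFDerivAt_zpowConjZpow a b m k hz).fderiv]
  ring

theorem rderiv_zpowConjZpow (hz : z ≠ 0) :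
    rderiv (zpowConjZpow a b m k) z = (m * a * z ^ m + k * b * conj z ^ k) / ‖z‖ := by
  have hz' : conj z ≠ 0 := by simpa using hz
  simp [rderiv, (hasFDerivAt_zpowConjZpow a b m k hz).fderiv, zpow_sub_one₀ hz,
    zpow_sub_one₀ hz']
  field_simp

theorem pdx_zpowConjZpow_eventuallyEq (hz : z ≠ 0) :
    pdx (zpowConjZpow a b m k) =ᶠ[𝓝 z] zpowConjZpow (a * m) (b * k) (m - 1) (k - 1) := by
  filter_upwards [isOpen_compl_singleton.mem_nhds hz] with w hw
  exact pdx_zpowConjZpow a b m k hw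

theorem pdy_zpowConjZpow_eventuallyEq (hz : z ≠ 0) :
    pdy (zpowConjZpow a b m k)
      =ᶠ[𝓝 z] zpowConjZpow (I * a * m) (-(I * b * k)) (m - 1) (k - 1) := by
  filter_upwards [isOpen_compl_singleton.mem_nhds hz] with w hw
  rw [pdy_zpowConjZpow a b m k hw, zpowConjZpow]
  ring

theorem laplacian_zpowConjZpow (hz : z ≠ 0) :
    pdx (pdx (zpowConjZpow a b m k)) z + pdy (pdy (zpowConjZpow a b m k)) z = 0 := by
  rw [pdx, pdy, (pdx_zpowConjZpow_eventuallyEq a b m k hz).fderiv_eq,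
    (pdy_zpowConjZpow_eventuallyEq a b m k hz).fderiv_eq, ← pdx, ← pdy,
    pdx_zpowConjZpow _ _ _ _ hz, pdy_zpowConjZpow _ _ _ _ hz]
  linear_combination (a * m * (m - 1 : ℤ) * z ^ (m - 1 - 1)
    + b * k * (k - 1 : ℤ) * conj z ^ (k - 1 - 1)) * I_mul_I

theorem norm_sq_pdx_add_norm_sq_pdy_zpowConjZpow (hz : z ≠ 0) :
    ‖pdx (zpowConjZpow a b m k) z‖ ^ 2 + ‖pdy (zpowConjZpow a b m k) z‖ ^ 2
      = 2 * (‖a‖ ^ 2 * m ^ 2 * ‖z‖ ^ (2 * m - 2)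
          + ‖b‖ ^ 2 * k ^ 2 * ‖z‖ ^ (2 * k - 2)) := by
  have hnorm (c : ℂ) (n : ℤ) (w : ℂ) :
      ‖c * n * w ^ (n - 1)‖ ^ 2 = ‖c‖ ^ 2 * n ^ 2 * ‖w‖ ^ (2 * n - 2) := by
    rw [norm_mul, norm_mul, norm_zpow, Complex.norm_intCast, mul_pow, mul_pow, sq_abs,
      show 2 * n - 2 = (n - 1) * 2 by ring, zpow_mul]
    norm_cast
  rw [pdx_zpowConjZpow a b m k hz, pdy_zpowConjZpow a b m k hz, norm_mul, norm_I, one_mul,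
    ← hnorm a m z, ← Complex.norm_conj z, ← hnorm b k (conj z),
    parallelogram_law_with_norm ℝ]

end Derivatives

theorem wedge_ofReal_mul_ofReal_mul (s t : ℝ) (w : ℂ) : wedge (s * w) (t * w) = 0 := by
  simp only [wedge, re_ofReal_mul, im_ofReal_mul]
  ring

theorem wedge_self_ofReal_mul_I_mul (w : ℂ) (t : ℝ) : wedge w (t * I * w) = t * normSq w := by
  simp only [wedge, normSq_apply, mul_re, mul_im, ofReal_re, ofReal_im, I_re, I_im]
  ring

theorem wedge_zpowConjZpow_rderiv (a : ℂ) (s : ℝ) (n : ℤ) {z : ℂ} (hz : z ≠ 0) :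
    wedge (zpowConjZpow a (a * s) n (-n) z) (rderiv (zpowConjZpow a (a * s) n (-n)) z) = 0 := by
  have hval : zpowConjZpow a (a * s) n (-n) z
      = ((1 + s / ‖z‖ ^ (2 * n) : ℝ) : ℂ) * (a * z ^ n) := by
    rw [zpowConjZpow_neg_of_norm_eq a _ n rfl]
    push_cast
    ring
  have hrad : rderiv (zpowConjZpow a (a * s) n (-n)) z
      = ((n * (1 - s / ‖z‖ ^ (2 * n)) / ‖z‖ : ℝ) : ℂ) * (a * z ^ n) := by
    rw [rderiv_zpowConjZpow _ _ _ _ hz, conj_zpow_neg]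
    push_cast
    ring
  rw [hval, hrad]
  exact wedge_ofReal_mul_ofReal_mul _ _ _

theorem degCirc_eq_of_eq_mul_zpow {u : ℂ → ℂ} {r : ℝ} (hr : 0 < r) {α : ℂ} (hα : ‖α‖ = 1)
    (n : ℤ) (hu : ∀ z, ‖z‖ = r → u z = α * (z / r) ^ n) : degCirc u r = n := by
  have hr' : (r : ℂ) ≠ 0 := ofReal_ne_zero.mpr hr.ne'
  have hpar (t : ℝ) : u (r * exp (I * t)) = α * exp (n * I * t) := by
    rw [hu _ (by simp [norm_exp_ofReal_mul_I, hr.le, mul_comm I]), mul_div_cancel_left₀ _ hr',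
      ← exp_int_mul, mul_assoc]
  have hderiv (t : ℝ) : HasDerivAt (fun t : ℝ => α * exp (n * I * t))
      (((n : ℝ) : ℂ) * I * (α * exp (n * I * t))) t := by
    have := (((hasDerivAt_id (t : ℂ)).const_mul (n * I)).cexp.const_mul α).comp_ofReal
    simpa [mul_comm, mul_left_comm, mul_assoc] using this
  have hnormSq (t : ℝ) : normSq (α * exp (n * I * t)) = 1 := by
    simp [normSq_eq_norm_sq, hα, norm_exp]
  simp_rw [degCirc, hpar, (hderiv _).deriv, wedge_self_ofReal_mul_I_mul, hnormSq, mul_one,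
    intervalIntegral.integral_const, smul_eq_mul, sub_zero]
  field_simp

theorem measurableSet_ann (ρ : ℝ) : MeasurableSet (ann ρ) :=
  measurableSet_Ioo.preimage measurable_norm

theorem ne_zero_of_mem_ann {ρ : ℝ} (hρ : 0 ≤ ρ) {z : ℂ} (hz : z ∈ ann ρ) : z ≠ 0 :=
  norm_pos_iff.mp (hρ.trans_lt hz.1)

theorem setIntegral_ann_comp_norm {ρ : ℝ} (hρ0 : 0 ≤ ρ) (hρ1 : ρ ≤ 1) (G : ℝ → ℝ) :
    ∫ z in ann ρ, G ‖z‖ = 2 * π * ∫ r in ρ..1, r * G r := by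
  have hind :
      (ann ρ).indicator (fun z => G ‖z‖) = fun z => (Set.Ioo ρ 1).indicator G ‖z‖ :=
    funext fun z => Set.indicator_comp_right (s := Set.Ioo ρ 1) (g := G) (‖·‖) (x := z)
  rw [← integral_indicator (measurableSet_ann ρ), hind, integral_fun_norm_addHaar volume,
    Complex.finrank_real_complex, measureReal_def, Complex.volume_ball]
  have hsub : Set.Ioo ρ 1 ⊆ Set.Ioi 0 := fun r hr => hρ0.trans_lt hr.1
  have hmul : (fun r : ℝ => r ^ (2 - 1) • (Set.Ioo ρ 1).indicator G r)
      = (Set.Ioo ρ 1).indicator (fun r => r * G r) :=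
    funext fun r => by rw [Set.indicator_mul_right, pow_one, smul_eq_mul]
  rw [hmul, setIntegral_indicator measurableSet_Ioo, Set.inter_eq_self_of_subset_right hsub,
    intervalIntegral.integral_of_le hρ1, integral_Ioc_eq_integral_Ioo]
  simp only [ENNReal.ofReal_one, one_pow, one_mul, ENNReal.coe_toReal, NNReal.coe_real_pi,
    smul_eq_mul, nsmul_eq_mul, Nat.cast_ofNat]
  ring

-- The factor `m ^ 2` keeps the identity true at `m = 0`, where `integral_zpow` does not apply.
theorem sq_mul_integral_mul_zpow {ρ : ℝ} (hρ : 0 < ρ) (m : ℤ) :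
    m ^ 2 * ∫ r in ρ..1, r * r ^ (2 * m - 2) = m * (1 - ρ ^ (2 * m)) / 2 := by
  rcases eq_or_ne m 0 with rfl | hm
  · simp
  have h0 : (0 : ℝ) ∉ Set.uIcc ρ 1 := Set.notMem_uIcc_of_lt hρ one_pos
  have hexp : 2 * m - 1 ≠ -1 := by omega
  rw [intervalIntegral.integral_congr (g := fun r => r ^ (2 * m - 1)),
    integral_zpow (.inr ⟨hexp, h0⟩)]
  · have hm' : (m : ℝ) ≠ 0 := by exact_mod_cast hm
    rw [sub_add_cancel, one_zpow]
    push_cast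
    field_simp
    ring
  · intro r hr
    have : r ≠ 0 := fun h => h0 (h ▸ hr)
    simp only
    rw [mul_comm, ← zpow_add_one₀ this]
    ring_nf

theorem energy_zpowConjZpow {ρ : ℝ} (hρ0 : 0 < ρ) (hρ1 : ρ ≤ 1) (a b : ℂ) (m k : ℤ) :
    energy ρ (zpowConjZpow a b m k)
      = π * (m * ‖a‖ ^ 2 * (1 - ρ ^ (2 * m)) + k * ‖b‖ ^ 2 * (1 - ρ ^ (2 * k))) := by
  have hint (n : ℤ) : IntervalIntegrable (fun r : ℝ => r * r ^ (2 * n - 2)) volume ρ 1 :=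
    (intervalIntegral.intervalIntegrable_zpow
      (.inr (Set.notMem_uIcc_of_lt hρ0 one_pos))).continuousOn_mul continuousOn_id
  let G : ℝ → ℝ := fun r =>
    2 * (‖a‖ ^ 2 * m ^ 2 * r ^ (2 * m - 2) + ‖b‖ ^ 2 * k ^ 2 * r ^ (2 * k - 2))
  have hsplit : ∫ r in ρ..1, r * G r
      = 2 * ‖a‖ ^ 2 * (m ^ 2 * ∫ r in ρ..1, r * r ^ (2 * m - 2))
        + 2 * ‖b‖ ^ 2 * (k ^ 2 * ∫ r in ρ..1, r * r ^ (2 * k - 2)) := by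
    simp only [← intervalIntegral.integral_const_mul]
    rw [← intervalIntegral.integral_add (((hint m).const_mul _).const_mul _)
      (((hint k).const_mul _).const_mul _)]
    congr 1 with r
    ring
  rw [energy, setIntegral_congr_fun (g := fun z => G ‖z‖) (measurableSet_ann ρ)
    fun z hz => norm_sq_pdx_add_norm_sq_pdy_zpowConjZpow a b m k (ne_zero_of_mem_ann hρ0.le hz),
    setIntegral_ann_comp_norm hρ0.le hρ1]
  rw [hsplit, sq_mul_integral_mul_zpow hρ0, sq_mul_integral_mul_zpow hρ0]
  ring

theorem ne_zero_of_mem_bdry {ρ : ℝ} (hρ : 0 < ρ) {z : ℂ} (hz : z ∈ bdry ρ) : z ≠ 0 := by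
  rintro rfl
  rcases hz with h | h <;> simp at h
  exact hρ.ne h

theorem zpowConjZpow_of_mem_bdry {ρ : ℝ} (hρ : 0 < ρ) (α : ℂ) (p : ℕ) {z : ℂ}
    (hz : z ∈ bdry ρ) :
    zpowConjZpow (α / (1 + ρ ^ p)) (α / (1 + ρ ^ p) * (ρ ^ p : ℝ)) p (-p) z
      = α * (z / ‖z‖) ^ (p : ℤ) := by
  have hρ' : (ρ : ℂ) ≠ 0 := ofReal_ne_zero.mpr hρ.ne'
  have hd : (1 : ℂ) + (ρ : ℂ) ^ p ≠ 0 := by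
    exact_mod_cast (by positivity : (0 : ℝ) < 1 + ρ ^ p).ne'
  rcases hz with hz | hz <;>
    rw [zpowConjZpow_neg_of_norm_eq _ _ _ hz, hz, div_zpow, mul_comm 2, zpow_mul] <;>
    push_cast [zpow_natCast, one_pow] <;> field_simp
  ring

theorem stmt9_general (ρ : ℝ) (hρ0 : 0 < ρ) (hρ1 : ρ < 1)
    (p : ℕ) (α : ℂ) (hα : ‖α‖ = 1)
    (u : ℂ → ℂ)
    (hu : u = fun z =>
      α * (z ^ p + (ρ : ℂ) ^ p * ((starRingEnd ℂ) z) ^ (-(p : ℤ))) / (1 + (ρ : ℂ) ^ p)) :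
    (∀ z ∈ ann ρ, pdx (pdx u) z + pdy (pdy u) z = 0) ∧
    (∀ z ∈ bdry ρ, ‖u z‖ = 1) ∧
    (∀ z ∈ bdry ρ, wedge (u z) (rderiv u z) = 0) ∧
    degCirc u 1 = (p : ℝ) ∧ degCirc u ρ = (p : ℝ) ∧
    energy ρ u = 2 * Real.pi * (p : ℝ) * (1 - ρ ^ p) / (1 + ρ ^ p) := by
  set c : ℂ := α / (1 + (ρ : ℂ) ^ p) with hc
  have hu' : u = zpowConjZpow c (c * (ρ ^ p : ℝ)) p (-p) := by
    subst hu
    funext z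
    rw [zpowConjZpow, zpow_natCast, hc]
    push_cast
    ring
  have hbdry (z : ℂ) (hz : z ∈ bdry ρ) : u z = α * (z / ‖z‖) ^ (p : ℤ) :=
    hu' ▸ zpowConjZpow_of_mem_bdry hρ0 α p hz
  refine ⟨fun z hz => hu' ▸ laplacian_zpowConjZpow _ _ _ _ (ne_zero_of_mem_ann hρ0.le hz),
    fun z hz => ?_,
    fun z hz => hu' ▸ wedge_zpowConjZpow_rderiv c _ p (ne_zero_of_mem_bdry hρ0 hz),
    ?_, ?_, ?_⟩
  · rw [hbdry z hz, norm_mul, hα, norm_zpow, norm_div, norm_real, norm_norm,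
      div_self (norm_ne_zero_iff.mpr (ne_zero_of_mem_bdry hρ0 hz)), one_zpow, one_mul]
  · exact_mod_cast degCirc_eq_of_eq_mul_zpow one_pos hα p fun z hz => by
      rw [hbdry z (.inl hz), hz]
  · exact_mod_cast degCirc_eq_of_eq_mul_zpow hρ0 hα p fun z hz => by
      rw [hbdry z (.inr hz), hz]
  · have hcnorm : ‖c‖ = 1 / (1 + ρ ^ p) := by
      rw [hc, norm_div, hα, ← ofReal_pow, ← ofReal_one, ← ofReal_add, norm_real,
        Real.norm_of_nonneg (by positivity)]
    rw [hu', energy_zpowConjZpow hρ0 hρ1.le, norm_mul, hcnorm, norm_real,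
      Real.norm_of_nonneg (by positivity), mul_neg, zpow_neg, mul_comm 2, zpow_mul]
    push_cast [zpow_natCast]
    field_simp
    ring

/-- The radial map `u_p(z) = α(z^p + ρ^p z̄^{−p})/(1 + ρ^p)` is a solution of the semi-stiff
problem, has degree `p` on both boundary circles, and `E(u_p) = 2πp(1 − ρ^p)/(1 + ρ^p)`. -/
theorem stmt9 (ρ : ℝ) (hρ0 : 0 < ρ) (hρ1 : ρ < 1)
    (p : ℕ) (hp : 1 ≤ p) (α : ℂ) (hα : ‖α‖ = 1)
    (u : ℂ → ℂ)
    (hu : u = fun z =>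
      α * (z ^ p + (ρ : ℂ) ^ p * ((starRingEnd ℂ) z) ^ (-(p : ℤ))) / (1 + (ρ : ℂ) ^ p)) :
    (∀ z ∈ ann ρ, pdx (pdx u) z + pdy (pdy u) z = 0) ∧
    (∀ z ∈ bdry ρ, ‖u z‖ = 1) ∧
    (∀ z ∈ bdry ρ, wedge (u z) (rderiv u z) = 0) ∧
    degCirc u 1 = (p : ℝ) ∧ degCirc u ρ = (p : ℝ) ∧
    energy ρ u = 2 * Real.pi * (p : ℝ) * (1 - ρ ^ p) / (1 + ρ ^ p) :=
  stmt9_general ρ hρ0 hρ1 p α hα u hu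
end

section
/- Let p ≥ 2 be an integer and define g_p(t) = (p−1)t^p + p·t^{p−1} − 1 for t ∈ [0,1]. Then g_p is strictly increasing on [0,1], g_p(0) = −1 and g_p(1) = 2(p−1) > 0, so there is a unique ρ'_p ∈ (0,1) with g_p(ρ'_p) = 0. Moreover, for every ρ ∈ (0,1) the strict inequality 2πp(1 − ρ^p)/(1 + ρ^p) > 2π(1 − ρ)/(1 + ρ) + 2π(p − 1) holds if and only if g_p(ρ) < 0, i.e. if and only if ρ < ρ'_p. Finally ρ'_2 = √2 − 1. -/
/-!
Clearing denominators, the energy excess of the degree-`p` radial map over the degree-one map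
plus the bubbling cost is `-4πρ g_p(ρ) / ((1 + ρ^p)(1 + ρ))`, so the comparison is the sign of
`g_p(ρ)`. Both monomials of `g_p` increase on `[0, 1]`, and `g_p` runs from `-1` to `2(p - 1)`,
so the intermediate value theorem gives its unique zero `ρ'_p`; for `p = 2`, `g_2(t) = t² + 2t - 1`.
-/

open Real Set

noncomputable section

/-- The paper's `g_p`. -/
def degreeGap (p : ℕ) (t : ℝ) : ℝ := ((p : ℝ) - 1) * t ^ p + (p : ℝ) * t ^ (p - 1) - 1

/-- The Dirichlet energy of the degree-`p` radial map `u_p` on the annulus `A_ρ`. -/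
def radialEnergy (p : ℕ) (ρ : ℝ) : ℝ := 2 * π * (p : ℝ) * (1 - ρ ^ p) / (1 + ρ ^ p)

end

section

variable {p : ℕ}

theorem strictMonoOn_degreeGap (hp : 2 ≤ p) : StrictMonoOn (degreeGap p) (Icc 0 1) := by
  intro x hx y _ hxy
  have hp' : (1 : ℝ) ≤ p := by exact_mod_cast (by omega : 1 ≤ p)
  have h₁ : x ^ p ≤ y ^ p := pow_le_pow_left₀ hx.1 hxy.le p
  have h₂ : x ^ (p - 1) < y ^ (p - 1) := pow_lt_pow_left₀ hxy hx.1 (by omega)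
  unfold degreeGap
  nlinarith

theorem degreeGap_zero (hp : 2 ≤ p) : degreeGap p 0 = -1 := by
  simp [degreeGap, zero_pow (by omega : p ≠ 0), zero_pow (by omega : p - 1 ≠ 0)]

theorem degreeGap_one (p : ℕ) : degreeGap p 1 = 2 * ((p : ℝ) - 1) := by
  simp only [degreeGap, one_pow]
  ring

theorem exists_degreeGap_eq_zero (hp : 2 ≤ p) : ∃ ρ ∈ Ioo (0 : ℝ) 1, degreeGap p ρ = 0 := by
  have hcont : ContinuousOn (degreeGap p) (Icc 0 1) := by
    unfold degreeGap
    fun_prop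
  have hpos : (0 : ℝ) < 2 * ((p : ℝ) - 1) := by
    have : (2 : ℝ) ≤ p := by exact_mod_cast hp
    linarith
  apply intermediate_value_Ioo zero_le_one hcont
  rw [degreeGap_zero hp, degreeGap_one]
  exact ⟨neg_one_lt_zero, hpos⟩

theorem radialEnergy_one (ρ : ℝ) : radialEnergy 1 ρ = 2 * π * (1 - ρ) / (1 + ρ) := by
  simp [radialEnergy]

theorem radialEnergy_sub_eq (hp : 1 ≤ p) {ρ : ℝ} (hρ : 0 ≤ ρ) :
    radialEnergy p ρ - (radialEnergy 1 ρ + 2 * π * ((p : ℝ) - 1)) =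
      4 * π * ρ / ((1 + ρ ^ p) * (1 + ρ)) * -degreeGap p ρ := by
  obtain ⟨q, rfl⟩ : ∃ q, p = q + 1 := ⟨p - 1, by omega⟩
  have : 0 < 1 + ρ ^ (q + 1) := by positivity
  have : 0 < 1 + ρ := by positivity
  simp only [radialEnergy, degreeGap, Nat.add_sub_cancel]
  field_simp
  push_cast
  ring

theorem radialEnergy_gt_iff (hp : 1 ≤ p) {ρ : ℝ} (hρ : 0 < ρ) :
    radialEnergy p ρ > radialEnergy 1 ρ + 2 * π * ((p : ℝ) - 1) ↔ degreeGap p ρ < 0 := by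
  have hc : 0 < 4 * π * ρ / ((1 + ρ ^ p) * (1 + ρ)) := by positivity
  rw [gt_iff_lt, ← sub_pos, radialEnergy_sub_eq hp hρ.le, mul_pos_iff_of_pos_left hc, neg_pos]

end

theorem degreeGap_two_sqrt_two_sub_one : degreeGap 2 (√2 - 1) = 0 := by
  have h : √2 ^ 2 = 2 := sq_sqrt zero_le_two
  simp only [degreeGap]
  push_cast
  linear_combination h

/-- Properties of `g_p(t) = (p−1)t^p + p t^{p−1} − 1`: it is strictly increasing on `[0,1]`
with `g_p(0) = −1` and `g_p(1) = 2(p−1) > 0`, it has a unique zero `ρ'_p ∈ (0,1)`, the energy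
comparison `2πp(1−ρ^p)/(1+ρ^p) > 2π(1−ρ)/(1+ρ) + 2π(p−1)` holds iff `g_p(ρ) < 0` iff
`ρ < ρ'_p`, and `ρ'_2 = √2 − 1`. -/
theorem stmt11 (p : ℕ) (hp : 2 ≤ p) (g : ℝ → ℝ)
    (hg : g = fun t : ℝ => ((p : ℝ) - 1) * t ^ p + (p : ℝ) * t ^ (p - 1) - 1) :
    StrictMonoOn g (Set.Icc (0 : ℝ) 1) ∧
    g 0 = -1 ∧ g 1 = 2 * ((p : ℝ) - 1) ∧ (0 : ℝ) < 2 * ((p : ℝ) - 1) ∧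
    ∃ ρ' : ℝ, ρ' ∈ Set.Ioo (0 : ℝ) 1 ∧ g ρ' = 0 ∧
      (∀ t ∈ Set.Ioo (0 : ℝ) 1, g t = 0 → t = ρ') ∧
      (∀ ρ ∈ Set.Ioo (0 : ℝ) 1,
        ((2 * Real.pi * (p : ℝ) * (1 - ρ ^ p) / (1 + ρ ^ p) >
            2 * Real.pi * (1 - ρ) / (1 + ρ) + 2 * Real.pi * ((p : ℝ) - 1)) ↔ g ρ < 0) ∧
        (g ρ < 0 ↔ ρ < ρ')) ∧
      (p = 2 → ρ' = Real.sqrt 2 - 1) := by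
  obtain rfl : g = degreeGap p := hg
  have hmono := strictMonoOn_degreeGap hp
  have hsub : Ioo (0 : ℝ) 1 ⊆ Icc 0 1 := Ioo_subset_Icc_self
  have hzero_unique : ∀ {s t}, s ∈ Ioo (0 : ℝ) 1 → t ∈ Ioo (0 : ℝ) 1 →
      degreeGap p s = 0 → degreeGap p t = 0 → s = t :=
    fun hs ht h₁ h₂ => hmono.injOn (hsub hs) (hsub ht) (h₁.trans h₂.symm)
  have hp' : (2 : ℝ) ≤ p := by exact_mod_cast hp
  obtain ⟨ρ', hρ', hzero⟩ := exists_degreeGap_eq_zero hp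
  refine ⟨hmono, degreeGap_zero hp, degreeGap_one p, by linarith,
    ρ', hρ', hzero, fun t ht h => hzero_unique ht hρ' h hzero, fun ρ hρ => ⟨?_, ?_⟩, ?_⟩
  · rw [← radialEnergy_one]
    exact radialEnergy_gt_iff (by omega) hρ.1
  · rw [← hzero]
    exact hmono.lt_iff_lt (hsub hρ) (hsub hρ')
  · rintro rfl
    have hmem : √2 - 1 ∈ Ioo (0 : ℝ) 1 := by
      constructor <;> nlinarith [sq_sqrt (zero_le_two : (0 : ℝ) ≤ 2), sqrt_nonneg 2]
    exact hzero_unique hρ' hmem hzero degreeGap_two_sqrt_two_sub_one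
end

section
/- For each integer p ≥ 2 let ρ'_p ∈ (0,1) be the unique zero of g_p(t) = (p−1)t^p + p·t^{p−1} − 1 in (0,1). Then the sequence (ρ'_p)_{p ≥ 2} is strictly increasing: ρ'_p < ρ'_{p+1} for every integer p ≥ 2. -/
/-!
Since `g_{p+1}(t) - g_p(t) = t^{p-1} (p t² + 2t - p)` and `g_{p+1}` is increasing on `[0, ∞)`,
it suffices that the quadratic factor is negative at `ρ'_p`, which holds once `ρ'_p < 1 - 1/p`.
That bound follows from `g_p(1 - 1/p) > 0`, a consequence of Bernoulli's inequality
`(1 - 1/p)^{p-1} ≥ 1/p`.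
-/

open Set

noncomputable def g (p : ℕ) (t : ℝ) : ℝ := ((p : ℝ) - 1) * t ^ p + (p : ℝ) * t ^ (p - 1) - 1

lemma g_succ (p : ℕ) (t : ℝ) : g (p + 1) t = (p : ℝ) * t ^ (p + 1) + ((p : ℝ) + 1) * t ^ p - 1 := by
  simp [g]

lemma monotoneOn_g {p : ℕ} (hp : 1 ≤ p) : MonotoneOn (g p) (Ici 0) := by
  intro s hs t _ hst
  have hp' : (0 : ℝ) ≤ (p : ℝ) - 1 := by
    rw [sub_nonneg]
    exact_mod_cast hp
  unfold g
  gcongr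

lemma g_succ_eq_add_mul {p : ℕ} (hp : 1 ≤ p) (t : ℝ) :
    g (p + 1) t = g p t + t ^ (p - 1) * (p * t ^ 2 + 2 * t - p) := by
  obtain ⟨q, rfl⟩ := Nat.exists_eq_add_of_le' hp
  simp only [g, Nat.add_sub_cancel]
  push_cast
  ring

lemma inv_le_one_sub_inv_pow {p : ℕ} (hp : 1 ≤ p) :
    (p : ℝ)⁻¹ ≤ (1 - (p : ℝ)⁻¹) ^ (p - 1) := by
  obtain ⟨q, rfl⟩ := Nat.exists_eq_add_of_le' hp
  have hbound : (-2 : ℝ) ≤ -((q : ℝ) + 1)⁻¹ := by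
    rw [neg_le_neg_iff]
    exact (inv_le_one_of_one_le₀ (by linarith)).trans one_le_two
  have bernoulli := one_add_mul_le_pow hbound q
  push_cast
  rw [sub_eq_add_neg]
  calc ((q : ℝ) + 1)⁻¹ = 1 + q * -((q : ℝ) + 1)⁻¹ := by field_simp; ring
    _ ≤ _ := bernoulli

lemma g_one_sub_inv_pos {p : ℕ} (hp : 2 ≤ p) : 0 < g p (1 - (p : ℝ)⁻¹) := by
  have hp1 : (2 : ℝ) ≤ p := by exact_mod_cast hp
  have hpow := inv_le_one_sub_inv_pow (p := p) (by omega)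
  have hsplit : g p (1 - (p : ℝ)⁻¹)
      = (1 - (p : ℝ)⁻¹) ^ (p - 1) * (((p : ℝ) - 1) * (1 - (p : ℝ)⁻¹) + p) - 1 := by
    obtain ⟨q, rfl⟩ := Nat.exists_eq_add_of_le' (by omega : 1 ≤ p)
    simp only [g, Nat.add_sub_cancel, pow_succ]
    ring
  have hfactor : 0 ≤ ((p : ℝ) - 1) * (1 - (p : ℝ)⁻¹) + p := by
    have : (p : ℝ)⁻¹ ≤ 1 := inv_le_one_of_one_le₀ (by linarith)
    nlinarith
  calc (0 : ℝ) < (p : ℝ)⁻¹ * (((p : ℝ) - 1) * (1 - (p : ℝ)⁻¹) + p) - 1 := by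
        field_simp
        nlinarith
    _ ≤ g p (1 - (p : ℝ)⁻¹) := by
        rw [hsplit]
        gcongr

lemma mul_sq_add_two_mul_sub_neg {p : ℕ} (hp : 1 ≤ p) {t : ℝ} (ht : 0 ≤ t) (htp : t < 1 - (p : ℝ)⁻¹) :
    (p : ℝ) * t ^ 2 + 2 * t - p < 0 := by
  have hp0 : (0 : ℝ) < p := by exact_mod_cast hp
  have hpt : p * t < p - 1 := by
    calc p * t < p * (1 - (p : ℝ)⁻¹) := by gcongr
      _ = p - 1 := by field_simp
  have ht1 : t < 1 := htp.trans_le (sub_le_self _ (by positivity))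
  nlinarith [mul_le_mul_of_nonneg_left hpt.le ht]

/-- The sequence `(ρ'_p)` of zeros of `g_p(t) = (p−1)t^p + p t^{p−1} − 1` in `(0,1)` is
strictly increasing: if `a` is the zero of `g_p` and `b` the zero of `g_{p+1}`, then `a < b`. -/
theorem stmt12 (p : ℕ) (hp : 2 ≤ p) (a b : ℝ)
    (ha : a ∈ Set.Ioo (0 : ℝ) 1) (hb : b ∈ Set.Ioo (0 : ℝ) 1)
    (hga : ((p : ℝ) - 1) * a ^ p + (p : ℝ) * a ^ (p - 1) - 1 = 0)
    (hgb : (p : ℝ) * b ^ (p + 1) + ((p : ℝ) + 1) * b ^ p - 1 = 0) :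
    a < b := by
  have hp1 : 1 ≤ p := by omega
  have hga' : g p a = 0 := hga
  have hgb' : g (p + 1) b = 0 := by rw [g_succ, hgb]
  have hc : 0 ≤ 1 - (p : ℝ)⁻¹ := sub_nonneg.mpr (inv_le_one_of_one_le₀ (by exact_mod_cast hp1))
  have ha_lt : a < 1 - (p : ℝ)⁻¹ :=
    (monotoneOn_g hp1).reflect_lt ha.1.le hc (hga' ▸ g_one_sub_inv_pos hp)
  have hg_succ_a : g (p + 1) a < 0 := by
    rw [g_succ_eq_add_mul hp1, hga', zero_add]
    exact mul_neg_of_pos_of_neg (pow_pos ha.1 _) (mul_sq_add_two_mul_sub_neg hp1 ha.1.le ha_lt)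
  exact (monotoneOn_g (by omega)).reflect_lt ha.1.le hb.1.le (hgb' ▸ hg_succ_a)
end
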